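/- arXiv:1306.3134 — 8 statements merged into one kernel-verified Lean document; each statement's English description precedes it below -/
import Mathlib

section
/- Suppose each F_{ij} is continuous and is either the identity or a deviation function D_i depending only on the row index i, and let A = {i : W_{i,Out(i)} > 0}. Then the set of c ∈ ℝ for which there exists an initial vector b₀ ∈ ℝ^n with T^t(b₀) converging to the constant vector (c,…,c) as t → ∞ equals the intersection ∩_{i∈A} Fix(D_i) (interpreted as all of ℝ when A is empty). -/
open Filter
open scoped Classical

/-!
An orbit of the continuous map `T` can only converge to a fixed point, and a fixed point is
the limit of its own constant orbit, so the attainable consensus values are the `c` for which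
the constant vector `c` is fixed by `T`. In row `i` the out-group entries all equal `D i`, so
`(T c)_i = c + W_{i,Out(i)} (D i c - c)`, which equals `c` iff `W_{i,Out(i)} = 0` or `D i c = c`.
-/

open Finset Function

theorem exists_tendsto_iterate_iff_isFixedPt {α : Type*} [TopologicalSpace α] [T2Space α]
    {f : α → α} (hf : Continuous f) (y : α) :
    (∃ x, Tendsto (fun n => f^[n] x) atTop (nhds y)) ↔ IsFixedPt f y := by
  refine ⟨fun ⟨_, hx⟩ => isFixedPt_of_tendsto_iterate hx hf.continuousAt, fun hy => ⟨y, ?_⟩⟩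
  simp only [(hy.iterate _).eq]
  exact tendsto_const_nhds

section WeightedSum

variable {ι : Type*} [Fintype ι] (w : ι → ℝ) {g : ι → ℝ → ℝ} {d : ℝ → ℝ}

theorem sum_mul_apply_eq_add_sum_filter_ne_id (hw1 : ∑ j, w j = 1)
    (hg : ∀ j, g j = id ∨ g j = d) (c : ℝ) :
    ∑ j, w j * g j c = c + (∑ j ∈ univ.filter fun j => g j ≠ id, w j) * (d c - c) := by
  have hterm : ∀ j, w j * g j c = w j * c + if g j ≠ id then w j * (d c - c) else 0 := by
    intro j
    rcases hg j with hj | rfl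
    · simp [hj]
    · by_cases hid : g j = id
      · simp [hid]
      · simp only [hid, ne_eq, not_false_eq_true, if_true]
        ring
  rw [sum_mul, sum_filter, Finset.sum_congr rfl fun j _ => hterm j, sum_add_distrib,
    ← sum_mul, hw1, one_mul]

theorem sum_mul_apply_eq_self_iff (hw0 : ∀ j, 0 ≤ w j) (hw1 : ∑ j, w j = 1)
    (hg : ∀ j, g j = id ∨ g j = d) (c : ℝ) :
    ∑ j, w j * g j c = c ↔ (0 < ∑ j ∈ univ.filter fun j => g j ≠ id, w j → d c = c) := by
  have hs : 0 ≤ ∑ j ∈ univ.filter fun j => g j ≠ id, w j := sum_nonneg fun j _ => hw0 j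
  rw [sum_mul_apply_eq_add_sum_filter_ne_id w hw1 hg, add_eq_left, mul_eq_zero, sub_eq_zero,
    hs.lt_iff_ne']
  tauto

end WeightedSum

theorem stmt_2_general (n : ℕ)
    (W : Matrix (Fin n) (Fin n) ℝ)
    (hW0 : ∀ i j, 0 ≤ W i j) (hW1 : ∀ i, ∑ j, W i j = 1)
    (F : Fin n → Fin n → ℝ → ℝ)
    (D : Fin n → ℝ → ℝ)
    (hF : ∀ i j, F i j = id ∨ F i j = D i)
    (hFc : ∀ i j, Continuous (F i j))
    (T : (Fin n → ℝ) → Fin n → ℝ)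
    (hT : ∀ b i, T b i = ∑ j, W i j * F i j (b j))
    (A : Set (Fin n))
    (hA : A = {i | 0 < ∑ j ∈ Finset.univ.filter fun j => F i j ≠ id, W i j}) :
    {c : ℝ | ∃ b₀ : Fin n → ℝ,
        Tendsto (fun t => T^[t] b₀) atTop (nhds fun _ => c)} =
      ⋂ i ∈ A, {x : ℝ | D i x = x} := by
  have hTc : Continuous T := by
    rw [show T = fun b i => ∑ j, W i j * F i j (b j) from funext₂ hT]
    fun_prop
  ext c
  simp only [Set.mem_ofPred_eq, exists_tendsto_iterate_iff_isFixedPt hTc, IsFixedPt, funext_iff,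
    hT, sum_mul_apply_eq_self_iff _ (hW0 _) (hW1 _) (hF _), hA, Set.mem_iInter]

/-- with continuous entries, each of which is the identity or a
row-dependent deviation function, the consensus values attainable in the limit
of the updating process are exactly the common neutral opinions of agents with
positive out-group weight. -/
theorem stmt_2 (n : ℕ) (hn : 2 ≤ n)
    (W : Matrix (Fin n) (Fin n) ℝ)
    (hW0 : ∀ i j, 0 ≤ W i j) (hW1 : ∀ i, ∑ j, W i j = 1)
    (F : Fin n → Fin n → ℝ → ℝ)
    (D : Fin n → ℝ → ℝ) (hD : ∀ i, D i ≠ id)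
    (hF : ∀ i j, F i j = id ∨ F i j = D i)
    (hFc : ∀ i j, Continuous (F i j))
    (T : (Fin n → ℝ) → Fin n → ℝ)
    (hT : ∀ b i, T b i = ∑ j, W i j * F i j (b j))
    (A : Set (Fin n))
    (hA : A = {i | 0 < ∑ j ∈ Finset.univ.filter fun j => F i j ≠ id, W i j}) :
    {c : ℝ | ∃ b₀ : Fin n → ℝ,
        Tendsto (fun t => T^[t] b₀) atTop (nhds fun _ => c)} =
      ⋂ i ∈ A, {x : ℝ | D i x = x} :=
  stmt_2_general n W hW0 hW1 F D hF hFc T hT A hA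
end

section
/- Let D be a deviation function with each F_{ij} ∈ {id, D}, and suppose T = W⊙F is opposition bipartite: there is a partition of {1,…,n} into two disjoint sets N₁, N₂ such that W_{ij} > 0 with i,j in the same set implies F_{ij} = id, and W_{ij} > 0 with i,j in different sets implies F_{ij} = D. If a, b ∈ ℝ are D-opposing viewpoints, i.e. D(a) = b and D(b) = a, then the vector p defined by p_i = a for i ∈ N₁ and p_i = b for i ∈ N₂ satisfies T p = p. -/
/-! On a same-group edge `F i j = id` carries `p j = p i` unchanged, and on a cross-group edge
`F i j = D` sends `a ↦ b` and `b ↦ a`, i.e. the opponent's view to one's own; so every term with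
positive weight in `(T p) i` equals `p i`, and since row `i` of `W` sums to `1`, `(T p) i = p i`. -/

theorem Finset.sum_mul_eq_of_sum_eq_one {ι R : Type*} [Fintype ι] [Semiring R] {w x : ι → R}
    {c : R} (hw : ∑ j, w j = 1) (hx : ∀ j, w j ≠ 0 → x j = c) : ∑ j, w j * x j = c := by
  calc ∑ j, w j * x j = ∑ j, w j * c := by
        refine Finset.sum_congr rfl fun j _ => ?_
        by_cases h : w j = 0
        · simp only [h, zero_mul]
        · rw [hx j h]
    _ = c := by rw [← Finset.sum_mul, hw, one_mul]

theorem stmt_3_general (n : ℕ)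
    (W : Matrix (Fin n) (Fin n) ℝ)
    (hW0 : ∀ i j, 0 ≤ W i j) (hW1 : ∀ i, ∑ j, W i j = 1)
    (D : ℝ → ℝ)
    (F : Fin n → Fin n → ℝ → ℝ)
    (T : (Fin n → ℝ) → Fin n → ℝ)
    (hT : ∀ b i, T b i = ∑ j, W i j * F i j (b j))
    (N₁ N₂ : Finset (Fin n)) (hcover : N₁ ∪ N₂ = Finset.univ)
    (hsame : ∀ i j, ((i ∈ N₁ ∧ j ∈ N₁) ∨ (i ∈ N₂ ∧ j ∈ N₂)) → 0 < W i j → F i j = id)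
    (hcross : ∀ i j, ((i ∈ N₁ ∧ j ∈ N₂) ∨ (i ∈ N₂ ∧ j ∈ N₁)) → 0 < W i j → F i j = D)
    (a b : ℝ) (hab : D a = b) (hba : D b = a)
    (p : Fin n → ℝ)
    (hp : ∀ i, (i ∈ N₁ → p i = a) ∧ (i ∈ N₂ → p i = b)) :
    T p = p := by
  have hmem : ∀ k, k ∈ N₁ ∨ k ∈ N₂ := fun k =>
    Finset.mem_union.mp (hcover ▸ Finset.mem_univ k)
  funext i
  rw [hT]
  refine Finset.sum_mul_eq_of_sum_eq_one (hW1 i) fun j hne => ?_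
  have hpos : 0 < W i j := (hW0 i j).lt_of_ne' hne
  rcases hmem i with hi | hi <;> rcases hmem j with hj | hj
  · rw [hsame i j (.inl ⟨hi, hj⟩) hpos, id, (hp j).1 hj, (hp i).1 hi]
  · rw [hcross i j (.inl ⟨hi, hj⟩) hpos, (hp j).2 hj, (hp i).1 hi, hba]
  · rw [hcross i j (.inr ⟨hi, hj⟩) hpos, (hp j).1 hj, (hp i).2 hi, hab]
  · rw [hsame i j (.inr ⟨hi, hj⟩) hpos, id, (hp j).2 hj, (hp i).2 hi]

/-- in an opposition bipartite network, a pair of `D`-opposing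
viewpoints assigned groupwise yields a fixed point of the update operator. -/
theorem stmt_3 (n : ℕ) (hn : 2 ≤ n)
    (W : Matrix (Fin n) (Fin n) ℝ)
    (hW0 : ∀ i j, 0 ≤ W i j) (hW1 : ∀ i, ∑ j, W i j = 1)
    (D : ℝ → ℝ) (hD : D ≠ id)
    (F : Fin n → Fin n → ℝ → ℝ)
    (hF : ∀ i j, F i j = id ∨ F i j = D)
    (T : (Fin n → ℝ) → Fin n → ℝ)
    (hT : ∀ b i, T b i = ∑ j, W i j * F i j (b j))
    (N₁ N₂ : Finset (Fin n)) (hdisj : Disjoint N₁ N₂) (hcover : N₁ ∪ N₂ = Finset.univ)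
    (hsame : ∀ i j, ((i ∈ N₁ ∧ j ∈ N₁) ∨ (i ∈ N₂ ∧ j ∈ N₂)) → 0 < W i j → F i j = id)
    (hcross : ∀ i j, ((i ∈ N₁ ∧ j ∈ N₂) ∨ (i ∈ N₂ ∧ j ∈ N₁)) → 0 < W i j → F i j = D)
    (a b : ℝ) (hab : D a = b) (hba : D b = a)
    (p : Fin n → ℝ)
    (hp : ∀ i, (i ∈ N₁ → p i = a) ∧ (i ∈ N₂ → p i = b)) :
    T p = p :=
  stmt_3_general n W hW0 hW1 D F T hT N₁ N₂ hcover hsame hcross a b hab hba p hp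
end

section
/- Let D be a deviation function with each F_{ij} ∈ {id, D}, and suppose T = W⊙F is reverse opposition bipartite: there is a partition of {1,…,n} into two disjoint sets N₁, N₂ such that W_{ij} > 0 with i,j in the same set implies F_{ij} = D, and W_{ij} > 0 with i,j in different sets implies F_{ij} = id. If a, b ∈ ℝ are D-opposing viewpoints, i.e. D(a) = b and D(b) = a, then the vectors p and p̄ defined by p_i = a, p̄_i = b for i ∈ N₁ and p_i = b, p̄_i = a for i ∈ N₂ satisfy T p = p̄ and T p̄ = p. -/
open Finset

theorem Finset.sum_mul_eq_sum_mul_of_ne_zero {ι : Type*} [Fintype ι] (w f : ι → ℝ) (c : ℝ)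
    (h : ∀ j, w j ≠ 0 → f j = c) : ∑ j, w j * f j = (∑ j, w j) * c := by
  rw [Finset.sum_mul]
  refine Finset.sum_congr rfl fun j _ => ?_
  by_cases hj : w j = 0
  · simp [hj]
  · rw [h j hj]

section ReverseOppositionBipartite

variable {ι : Type*} {W : Matrix ι ι ℝ} {D : ℝ → ℝ} {F : ι → ι → ℝ → ℝ}
  {N₁ N₂ : Finset ι} {a b : ℝ} {p pbar : ι → ℝ}

/-- A same-side link applies `D`, turning the shared value into the opposing one; a cross link
passes the other side's value on unchanged. -/
theorem apply_eq_of_reverseOppositionBipartite (hcover : ∀ k, k ∈ N₁ ∨ k ∈ N₂)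
    (hsame : ∀ i j, ((i ∈ N₁ ∧ j ∈ N₁) ∨ (i ∈ N₂ ∧ j ∈ N₂)) → 0 < W i j → F i j = D)
    (hcross : ∀ i j, ((i ∈ N₁ ∧ j ∈ N₂) ∨ (i ∈ N₂ ∧ j ∈ N₁)) → 0 < W i j → F i j = id)
    (hab : D a = b) (hba : D b = a)
    (hp : ∀ i, (i ∈ N₁ → p i = a) ∧ (i ∈ N₂ → p i = b))
    (hpbar : ∀ i, (i ∈ N₁ → pbar i = b) ∧ (i ∈ N₂ → pbar i = a))
    {i j : ι} (hij : 0 < W i j) : F i j (p j) = pbar i := by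
  rcases hcover i with hi | hi <;> rcases hcover j with hj | hj
  · rw [hsame i j (.inl ⟨hi, hj⟩) hij, (hp j).1 hj, (hpbar i).1 hi, hab]
  · rw [hcross i j (.inl ⟨hi, hj⟩) hij, (hp j).2 hj, (hpbar i).1 hi, id]
  · rw [hcross i j (.inr ⟨hi, hj⟩) hij, (hp j).1 hj, (hpbar i).2 hi, id]
  · rw [hsame i j (.inr ⟨hi, hj⟩) hij, (hp j).2 hj, (hpbar i).2 hi, hba]

theorem update_eq_of_reverseOppositionBipartite [Fintype ι]
    (hW0 : ∀ i j, 0 ≤ W i j) (hW1 : ∀ i, ∑ j, W i j = 1) (hcover : ∀ k, k ∈ N₁ ∨ k ∈ N₂)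
    (hsame : ∀ i j, ((i ∈ N₁ ∧ j ∈ N₁) ∨ (i ∈ N₂ ∧ j ∈ N₂)) → 0 < W i j → F i j = D)
    (hcross : ∀ i j, ((i ∈ N₁ ∧ j ∈ N₂) ∨ (i ∈ N₂ ∧ j ∈ N₁)) → 0 < W i j → F i j = id)
    (hab : D a = b) (hba : D b = a)
    (hp : ∀ i, (i ∈ N₁ → p i = a) ∧ (i ∈ N₂ → p i = b))
    (hpbar : ∀ i, (i ∈ N₁ → pbar i = b) ∧ (i ∈ N₂ → pbar i = a)) :
    (fun i => ∑ j, W i j * F i j (p j)) = pbar := by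
  funext i
  rw [sum_mul_eq_sum_mul_of_ne_zero _ _ (pbar i), hW1, one_mul]
  exact fun j hj => apply_eq_of_reverseOppositionBipartite hcover hsame hcross hab hba hp hpbar
    ((hW0 i j).lt_of_ne' hj)

end ReverseOppositionBipartite

theorem stmt_4_general (n : ℕ)
    (W : Matrix (Fin n) (Fin n) ℝ)
    (hW0 : ∀ i j, 0 ≤ W i j) (hW1 : ∀ i, ∑ j, W i j = 1)
    (D : ℝ → ℝ)
    (F : Fin n → Fin n → ℝ → ℝ)
    (T : (Fin n → ℝ) → Fin n → ℝ)
    (hT : ∀ b i, T b i = ∑ j, W i j * F i j (b j))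
    (N₁ N₂ : Finset (Fin n)) (hcover : N₁ ∪ N₂ = Finset.univ)
    (hsame : ∀ i j, ((i ∈ N₁ ∧ j ∈ N₁) ∨ (i ∈ N₂ ∧ j ∈ N₂)) → 0 < W i j → F i j = D)
    (hcross : ∀ i j, ((i ∈ N₁ ∧ j ∈ N₂) ∨ (i ∈ N₂ ∧ j ∈ N₁)) → 0 < W i j → F i j = id)
    (a b : ℝ) (hab : D a = b) (hba : D b = a)
    (p pbar : Fin n → ℝ)
    (hp : ∀ i, (i ∈ N₁ → p i = a) ∧ (i ∈ N₂ → p i = b))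
    (hpbar : ∀ i, (i ∈ N₁ → pbar i = b) ∧ (i ∈ N₂ → pbar i = a)) :
    T p = pbar ∧ T pbar = p := by
  have hT' : T = fun q i => ∑ j, W i j * F i j (q j) := funext fun q => funext (hT q)
  subst hT'
  have hmem : ∀ k, k ∈ N₁ ∨ k ∈ N₂ := fun k => mem_union.mp (hcover ▸ mem_univ k)
  exact ⟨update_eq_of_reverseOppositionBipartite hW0 hW1 hmem hsame hcross hab hba hp hpbar,
    update_eq_of_reverseOppositionBipartite hW0 hW1 hmem hsame hcross hba hab hpbar hp⟩

/-- in a reverse opposition bipartite network, complementary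
assignments of `D`-opposing viewpoints are swapped by the update operator. -/
theorem stmt_4 (n : ℕ) (hn : 2 ≤ n)
    (W : Matrix (Fin n) (Fin n) ℝ)
    (hW0 : ∀ i j, 0 ≤ W i j) (hW1 : ∀ i, ∑ j, W i j = 1)
    (D : ℝ → ℝ) (hD : D ≠ id)
    (F : Fin n → Fin n → ℝ → ℝ)
    (hF : ∀ i j, F i j = id ∨ F i j = D)
    (T : (Fin n → ℝ) → Fin n → ℝ)
    (hT : ∀ b i, T b i = ∑ j, W i j * F i j (b j))
    (N₁ N₂ : Finset (Fin n)) (hdisj : Disjoint N₁ N₂) (hcover : N₁ ∪ N₂ = Finset.univ)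
    (hsame : ∀ i j, ((i ∈ N₁ ∧ j ∈ N₁) ∨ (i ∈ N₂ ∧ j ∈ N₂)) → 0 < W i j → F i j = D)
    (hcross : ∀ i j, ((i ∈ N₁ ∧ j ∈ N₂) ∨ (i ∈ N₂ ∧ j ∈ N₁)) → 0 < W i j → F i j = id)
    (a b : ℝ) (hab : D a = b) (hba : D b = a)
    (p pbar : Fin n → ℝ)
    (hp : ∀ i, (i ∈ N₁ → p i = a) ∧ (i ∈ N₂ → p i = b))
    (hpbar : ∀ i, (i ∈ N₁ → pbar i = b) ∧ (i ∈ N₂ → pbar i = a)) :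
    T p = pbar ∧ T pbar = p :=
  stmt_4_general n W hW0 hW1 D F T hT N₁ N₂ hcover hsame hcross a b hab hba p pbar hp hpbar
end

section
/- Suppose every F_{ij} ∈ {id, D} where D(x) = a·x for a fixed constant a ∈ ℝ with |a| < 1, and suppose W_{i,Out(i)} > 0 for every agent i. Then for every initial vector b₀ ∈ ℝ^n, the iterates T^t(b₀) converge to the zero vector as t → ∞ (i.e., the updating process induces the consensus (0,…,0) for every initial opinion vector). -/
/-!
An agent with out-group weight `w` averages `|a|`-scaled opinions with weight `w` and unscaled
ones with weight `1 - w`, so in the sup norm each coordinate of `T b` is at most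
`(1 - (1 - |a|) w) ‖b‖`. Since there are finitely many agents and each `w > 0`, `T` shrinks the sup
norm by a uniform factor `c < 1`, and `‖T^[t] b‖ ≤ c ^ t ‖b‖ → 0`.
-/

open Filter Topology Finset
open scoped Classical

theorem norm_iterate_le_pow_mul {E : Type*} [SeminormedAddCommGroup E] {T : E → E} {c : ℝ}
    (hc : 0 ≤ c) (hT : ∀ x, ‖T x‖ ≤ c * ‖x‖) (x : E) (t : ℕ) :
    ‖T^[t] x‖ ≤ c ^ t * ‖x‖ := by
  induction t with
  | zero => simp
  | succ t ih =>
    rw [Function.iterate_succ_apply']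
    calc ‖T (T^[t] x)‖ ≤ c * ‖T^[t] x‖ := hT _
      _ ≤ c * (c ^ t * ‖x‖) := mul_le_mul_of_nonneg_left ih hc
      _ = c ^ (t + 1) * ‖x‖ := by ring

theorem tendsto_iterate_nhds_zero_of_norm_le_mul {E : Type*} [SeminormedAddCommGroup E]
    {T : E → E} {c : ℝ} (hc0 : 0 ≤ c) (hc1 : c < 1) (hT : ∀ x, ‖T x‖ ≤ c * ‖x‖) (x : E) :
    Tendsto (fun t => T^[t] x) atTop (𝓝 0) := by
  rw [tendsto_zero_iff_norm_tendsto_zero]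
  have hlim : Tendsto (fun t => c ^ t * ‖x‖) atTop (𝓝 0) := by
    simpa using (tendsto_pow_atTop_nhds_zero_of_lt_one hc0 hc1).mul_const ‖x‖
  exact squeeze_zero (fun _ => norm_nonneg _) (norm_iterate_le_pow_mul hc0 hT x) hlim

theorem Finite.exists_nonneg_lt_one_forall_le {ι : Type*} [Finite ι] {c : ι → ℝ}
    (hc : ∀ i, c i < 1) : ∃ C, 0 ≤ C ∧ C < 1 ∧ ∀ i, c i ≤ C := by
  rcases isEmpty_or_nonempty ι with _ | _
  · exact ⟨0, le_rfl, zero_lt_one, isEmptyElim⟩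
  · obtain ⟨i₀, hi₀⟩ := Finite.exists_max c
    exact ⟨max (c i₀) 0, le_max_right _ _, max_lt (hc i₀) zero_lt_one,
      fun i => (hi₀ i).trans (le_max_left _ _)⟩

theorem abs_sum_mul_le_sub_mul_sum {ι : Type*} [Fintype ι] {w x : ι → ℝ}
    (hw0 : ∀ j, 0 ≤ w j) (hw1 : ∑ j, w j = 1) (s : Finset ι) {r R : ℝ}
    (hs : ∀ j ∈ s, |x j| ≤ r) (hx : ∀ j ∉ s, |x j| ≤ R) :
    |∑ j, w j * x j| ≤ R - (R - r) * ∑ j ∈ s, w j := by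
  have hcompl : ∑ j ∈ sᶜ, w j = 1 - ∑ j ∈ s, w j := by
    rw [← hw1, ← sum_add_sum_compl s w]; ring
  calc |∑ j, w j * x j| ≤ ∑ j, w j * |x j| := by
        refine (abs_sum_le_sum_abs _ _).trans_eq (sum_congr rfl fun j _ => ?_)
        rw [abs_mul, abs_of_nonneg (hw0 j)]
    _ = ∑ j ∈ s, w j * |x j| + ∑ j ∈ sᶜ, w j * |x j| := (sum_add_sum_compl s _).symm
    _ ≤ ∑ j ∈ s, w j * r + ∑ j ∈ sᶜ, w j * R := by
        gcongr with j hj j hj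
        · exact hw0 j
        · exact hs j hj
        · exact hw0 j
        · exact hx j (mem_compl.1 hj)
    _ = R - (R - r) * ∑ j ∈ s, w j := by rw [← sum_mul, ← sum_mul, hcompl]; ring

theorem abs_sum_mul_apply_le {ι : Type*} [Fintype ι] {w : ι → ℝ} {a : ℝ} {F : ι → ℝ → ℝ}
    (hw0 : ∀ j, 0 ≤ w j) (hw1 : ∑ j, w j = 1) (hF : ∀ j, F j = id ∨ F j = fun x => a * x)
    (b : ι → ℝ) :
    |∑ j, w j * F j (b j)| ≤ (1 - (1 - |a|) * ∑ j ∈ univ.filter fun j => F j ≠ id, w j) * ‖b‖ := by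
  have hb : ∀ j, |b j| ≤ ‖b‖ := fun j => by
    simpa only [Real.norm_eq_abs] using norm_le_pi_norm b j
  have hscaled : ∀ j ∈ univ.filter fun j => F j ≠ id, |F j (b j)| ≤ |a| * ‖b‖ := by
    intro j hj
    rw [(hF j).resolve_left (mem_filter.1 hj).2, abs_mul]
    exact mul_le_mul_of_nonneg_left (hb j) (abs_nonneg a)
  have hid : ∀ j ∉ univ.filter fun j => F j ≠ id, |F j (b j)| ≤ ‖b‖ := by
    intro j hj
    rw [not_not.1 fun h => hj (mem_filter.2 ⟨mem_univ j, h⟩)]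
    exact hb j
  refine (abs_sum_mul_le_sub_mul_sum hw0 hw1 _ hscaled hid).trans_eq ?_
  ring

theorem stmt_7_general (n : ℕ)
    (W : Matrix (Fin n) (Fin n) ℝ)
    (hW0 : ∀ i j, 0 ≤ W i j) (hW1 : ∀ i, ∑ j, W i j = 1)
    (a : ℝ) (ha : |a| < 1)
    (D : ℝ → ℝ) (hDdef : D = fun x => a * x)
    (F : Fin n → Fin n → ℝ → ℝ)
    (hF : ∀ i j, F i j = id ∨ F i j = D)
    (hOut : ∀ i, 0 < ∑ j ∈ Finset.univ.filter fun j => F i j ≠ id, W i j)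
    (T : (Fin n → ℝ) → Fin n → ℝ)
    (hT : ∀ b i, T b i = ∑ j, W i j * F i j (b j)) :
    ∀ b₀ : Fin n → ℝ, Tendsto (fun t => T^[t] b₀) atTop (nhds 0) := by
  subst hDdef
  obtain ⟨c, hc0, hc1, hc⟩ := Finite.exists_nonneg_lt_one_forall_le
    (c := fun i => 1 - (1 - |a|) * ∑ j ∈ univ.filter fun j => F i j ≠ id, W i j)
    fun i => sub_lt_self 1 (mul_pos (sub_pos.2 ha) (hOut i))
  refine tendsto_iterate_nhds_zero_of_norm_le_mul hc0 hc1 fun b =>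
    (pi_norm_le_iff_of_nonneg (by positivity)).2 fun i => ?_
  rw [Real.norm_eq_abs, hT]
  exact (abs_sum_mul_apply_le (hW0 i) (hW1 i) (hF i) b).trans
    (mul_le_mul_of_nonneg_right (hc i) (norm_nonneg b))

/-- if `D(x) = a·x` with `|a| < 1` and every agent places positive
weight on its out-group, then the updating process converges to the zero
consensus from every initial opinion vector. -/
theorem stmt_7 (n : ℕ) (hn : 2 ≤ n)
    (W : Matrix (Fin n) (Fin n) ℝ)
    (hW0 : ∀ i j, 0 ≤ W i j) (hW1 : ∀ i, ∑ j, W i j = 1)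
    (a : ℝ) (ha : |a| < 1)
    (D : ℝ → ℝ) (hDdef : D = fun x => a * x)
    (F : Fin n → Fin n → ℝ → ℝ)
    (hF : ∀ i j, F i j = id ∨ F i j = D)
    (hOut : ∀ i, 0 < ∑ j ∈ Finset.univ.filter fun j => F i j ≠ id, W i j)
    (T : (Fin n → ℝ) → Fin n → ℝ)
    (hT : ∀ b i, T b i = ∑ j, W i j * F i j (b j)) :
    ∀ b₀ : Fin n → ℝ, Tendsto (fun t => T^[t] b₀) atTop (nhds 0) :=
  stmt_7_general n W hW0 hW1 a ha D hDdef F hF hOut T hT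
end

section
/- Let A be a signed interaction matrix that is strongly connected and aperiodic. Then: (i) A induces a nontrivial polarization if and only if A is opposition bipartite; (ii) A is divergent if and only if A is reverse opposition bipartite; (iii) A induces a neutral consensus if and only if A is neither opposition bipartite nor reverse opposition bipartite. -/
/-! The row condition puts every eigenvalue of `A` in `[-1, 1]`. If `A v = ± v` with `v ≠ 0`,
then at a coordinate where `|v|` is maximal the triangle inequality for `(A v)_i` is an equality;
strong connectivity spreads this to all coordinates, so `|v|` is constant and the signs of `v`
exhibit `A` (for `+1`) or `-A` (for `-1`) as opposition bipartite. Conversely such a bipartition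
turns its sign vector into an eigenvector for `+1` resp. `-1`. Both cannot hold at once: the
product of the two sign vectors changes sign along every edge, so all closed walks have even
length, against aperiodicity.

Since `A` is symmetric, `A ^ t b` converges as soon as `-1` is not an eigenvalue, and the limit is
fixed by `A`. A nonzero fixed vector makes `A` opposition bipartite and has constant modulus, hence
is a polarization; without either bipartition the limit is therefore `0`, while with the reverse
one the trajectory of the sign vector alternates between `s` and `-s`.
-/

open Filter

variable {n : ℕ}

/-- Entrywise absolute value of a matrix. -/
def absMat (A : Matrix (Fin n) (Fin n) ℝ) : Matrix (Fin n) (Fin n) ℝ :=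
  A.map fun x => |x|

/-- `A` is strongly connected: for all `i j` there is `k ≥ 1` with `(|A|^k)_{ij} > 0`. -/
def StronglyConnected (A : Matrix (Fin n) (Fin n) ℝ) : Prop :=
  ∀ i j, ∃ k : ℕ, 1 ≤ k ∧ 0 < (absMat A ^ k) i j

/-- `A` is aperiodic: for each `i`, the gcd of `{k ≥ 1 : (|A|^k)_{ii} > 0}` is `1`,
phrased as: every common divisor of that set equals `1`. -/
def Aperiodic (A : Matrix (Fin n) (Fin n) ℝ) : Prop :=
  ∀ i, ∀ d : ℕ, (∀ k : ℕ, 1 ≤ k → 0 < (absMat A ^ k) i i → d ∣ k) → d = 1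

/-- `A` is opposition bipartite: a two-set partition (given by `S` and its
complement) with nonnegative entries within sets and nonpositive across. -/
def OppBip (A : Matrix (Fin n) (Fin n) ℝ) : Prop :=
  ∃ S : Set (Fin n), ∀ i j,
    (((i ∈ S ∧ j ∈ S) ∨ (i ∉ S ∧ j ∉ S)) → 0 ≤ A i j) ∧
    (((i ∈ S ∧ j ∉ S) ∨ (i ∉ S ∧ j ∈ S)) → A i j ≤ 0)

/-- `A` is reverse opposition bipartite: nonpositive entries within sets and
nonnegative across. -/
def RevOppBip (A : Matrix (Fin n) (Fin n) ℝ) : Prop :=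
  ∃ S : Set (Fin n), ∀ i j,
    (((i ∈ S ∧ j ∈ S) ∨ (i ∉ S ∧ j ∉ S)) → A i j ≤ 0) ∧
    (((i ∈ S ∧ j ∉ S) ∨ (i ∉ S ∧ j ∈ S)) → 0 ≤ A i j)

/-- `A` is divergent: some initial vector has no limit under iteration. -/
def Divergent (A : Matrix (Fin n) (Fin n) ℝ) : Prop :=
  ∃ b₀ : Fin n → ℝ, ¬ ∃ L : Fin n → ℝ,
    Tendsto (fun t => (A ^ t).mulVec b₀) atTop (nhds L)

/-- `A` induces a neutral consensus: iterates converge to `0` from every start. -/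
def NeutralConsensus (A : Matrix (Fin n) (Fin n) ℝ) : Prop :=
  ∀ b₀ : Fin n → ℝ, Tendsto (fun t => (A ^ t).mulVec b₀) atTop (nhds 0)

/-- A vector is a polarization if its entries take at most two values. -/
def IsPolarization (p : Fin n → ℝ) : Prop :=
  ∃ a b : ℝ, ∀ i, p i = a ∨ p i = b

/-- `A` induces a nontrivial polarization: from every start the limit exists
and is a polarization, and from some start the limit is nonzero. -/
def InducesNontrivialPolarization (A : Matrix (Fin n) (Fin n) ℝ) : Prop :=
  (∀ b₀ : Fin n → ℝ, ∃ L : Fin n → ℝ,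
      Tendsto (fun t => (A ^ t).mulVec b₀) atTop (nhds L) ∧ IsPolarization L) ∧
  (∃ (b₀ L : Fin n → ℝ),
      Tendsto (fun t => (A ^ t).mulVec b₀) atTop (nhds L) ∧ L ≠ 0)

open Matrix Topology

lemma exists_tendsto_pow_of_mem_Ioc {x : ℝ} (hx : x ∈ Set.Ioc (-1) 1) :
    ∃ ℓ, Tendsto (fun t : ℕ => x ^ t) atTop (𝓝 ℓ) := by
  rcases hx.2.eq_or_lt with rfl | hlt
  · exact ⟨1, by simp⟩
  · exact ⟨0, tendsto_pow_atTop_nhds_zero_of_abs_lt_one (abs_lt.mpr ⟨hx.1, hlt⟩)⟩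

namespace Matrix

variable {ι : Type*} [Fintype ι]

lemma exists_pos_of_pow_succ_apply_pos [DecidableEq ι] {M : Matrix ι ι ℝ}
    (hM : ∀ i j, 0 ≤ M i j) {k : ℕ} {i j : ι} (h : 0 < (M ^ (k + 1)) i j) :
    ∃ l, 0 < M i l ∧ 0 < (M ^ k) l j := by
  rw [pow_succ', mul_apply] at h
  obtain ⟨l, -, hl⟩ := Finset.exists_lt_of_sum_lt (f := fun _ => (0 : ℝ)) (by simpa using h)
  exact ⟨l, (pos_and_pos_or_neg_and_neg_of_mul_pos hl).resolve_right
    fun hneg => (hM i l).not_gt hneg.1⟩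

lemma imp_of_pow_apply_pos [DecidableEq ι] {M : Matrix ι ι ℝ} (hM : ∀ i j, 0 ≤ M i j)
    {T : ι → Prop} (hT : ∀ i j, 0 < M i j → T i → T j) {k : ℕ} {i j : ι}
    (h : 0 < (M ^ k) i j) (hi : T i) : T j := by
  induction k generalizing i with
  | zero =>
    rw [pow_zero, one_apply] at h
    split_ifs at h with hij
    exacts [hij ▸ hi, (lt_irrefl 0 h).elim]
  | succ k ih =>
    obtain ⟨l, hil, hlj⟩ := exists_pos_of_pow_succ_apply_pos hM h
    exact ih hlj (hT i l hil hi)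

lemma apply_eq_neg_one_pow_mul_of_pow_apply_pos [DecidableEq ι] {M : Matrix ι ι ℝ}
    (hM : ∀ i j, 0 ≤ M i j) {f : ι → ℝ} (hf : ∀ i j, 0 < M i j → f j = -f i) {k : ℕ} {i j : ι}
    (h : 0 < (M ^ k) i j) : f j = (-1) ^ k * f i := by
  induction k generalizing i with
  | zero =>
    rw [pow_zero, one_apply] at h
    split_ifs at h with hij
    exacts [by rw [hij, pow_zero, one_mul], (lt_irrefl 0 h).elim]
  | succ k ih =>
    obtain ⟨l, hil, hlj⟩ := exists_pos_of_pow_succ_apply_pos hM h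
    rw [ih hlj, hf i l hil, pow_succ]
    ring

lemma pow_mulVec_eq_of_mulVec_eq_smul [DecidableEq ι] {A : Matrix ι ι ℝ} {μ : ℝ} {v : ι → ℝ}
    (h : A *ᵥ v = μ • v) (t : ℕ) : (A ^ t) *ᵥ v = μ ^ t • v := by
  induction t with
  | zero => simp
  | succ t ih => rw [pow_succ', ← mulVec_mulVec, ih, mulVec_smul, h, smul_smul, pow_succ]

lemma mulVec_eq_self_of_tendsto_pow_mulVec [DecidableEq ι] {A : Matrix ι ι ℝ} {b L : ι → ℝ}
    (h : Tendsto (fun t => (A ^ t) *ᵥ b) atTop (𝓝 L)) : A *ᵥ L = L := by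
  have hA : Tendsto (fun t => A *ᵥ ((A ^ t) *ᵥ b)) atTop (𝓝 (A *ᵥ L)) :=
    ((continuous_const.matrix_mulVec continuous_id).tendsto L).comp h
  have hshift : Tendsto (fun t => (A ^ (t + 1)) *ᵥ b) atTop (𝓝 L) :=
    (tendsto_add_atTop_iff_nat 1).mpr h
  simp only [pow_succ', ← mulVec_mulVec] at hshift
  exact tendsto_nhds_unique hA hshift

lemma IsHermitian.exists_tendsto_pow_mulVec [DecidableEq ι] {A : Matrix ι ι ℝ} (hA : A.IsHermitian)
    (hev : ∀ k, hA.eigenvalues k ∈ Set.Ioc (-1) 1) (b : ι → ℝ) :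
    ∃ L, Tendsto (fun t => (A ^ t) *ᵥ b) atTop (𝓝 L) := by
  set u := hA.eigenvectorBasis
  set c := u.repr (WithLp.toLp 2 b)
  have hb : b = ∑ k, c k • ⇑(u k) := by
    simpa [WithLp.ofLp_sum, WithLp.ofLp_smul] using
      congrArg WithLp.ofLp (u.sum_repr (WithLp.toLp 2 b)).symm
  have hpow : ∀ t, (A ^ t) *ᵥ b = ∑ k, (c k * hA.eigenvalues k ^ t) • ⇑(u k) := fun t => by
    rw [hb, mulVec_sum]
    refine Finset.sum_congr rfl fun k _ => ?_
    rw [mulVec_smul, pow_mulVec_eq_of_mulVec_eq_smul (hA.mulVec_eigenvectorBasis k), smul_smul]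
  choose ℓ hℓ using fun k => exists_tendsto_pow_of_mem_Ioc (hev k)
  refine ⟨∑ k, (c k * ℓ k) • ⇑(u k), ?_⟩
  simp only [hpow]
  exact tendsto_finsetSum _ fun k _ => ((hℓ k).const_mul (c k)).smul_const _

lemma abs_le_one_of_mulVec_eq_smul {A : Matrix ι ι ℝ} (hrow : ∀ i, ∑ j, |A i j| ≤ 1) {μ : ℝ}
    {v : ι → ℝ} (hv : v ≠ 0) (h : A *ᵥ v = μ • v) : |μ| ≤ 1 := by
  obtain ⟨i₀, hi₀⟩ := Function.ne_iff.mp hv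
  obtain ⟨i, -, hmax⟩ := Finset.exists_max_image Finset.univ (fun j => |v j|) ⟨i₀, by simp⟩
  have hvi : 0 < |v i| := (abs_pos.mpr hi₀).trans_le (hmax i₀ (by simp))
  have : |μ| * |v i| ≤ 1 * |v i| :=
    calc |μ| * |v i| = |∑ j, A i j * v j| := by
          rw [← abs_mul, ← smul_eq_mul, ← Pi.smul_apply, ← h, mulVec, dotProduct]
      _ ≤ ∑ j, |A i j| * |v i| := Finset.abs_sum_le_sum_abs _ _ |>.trans <|
          Finset.sum_le_sum fun j _ => by
            rw [abs_mul]; exact mul_le_mul_of_nonneg_left (hmax j (by simp)) (abs_nonneg _)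
      _ ≤ 1 * |v i| := by rw [← Finset.sum_mul]; exact mul_le_mul_of_nonneg_right (hrow i) hvi.le
  exact le_of_mul_le_mul_right this hvi

lemma mul_apply_mul_eq_of_forall_abs_le {A : Matrix ι ι ℝ} (hrow : ∀ i, ∑ j, |A i j| ≤ 1)
    {v : ι → ℝ} (hv : A *ᵥ v = v) {i : ι} (hmax : ∀ j, |v j| ≤ |v i|) (j : ι) :
    v i * A i j * v j = |A i j| * v i ^ 2 := by
  have hterm : ∀ j, v i * A i j * v j ≤ |A i j| * v i ^ 2 := fun j =>
    calc v i * A i j * v j ≤ |v i * A i j * v j| := le_abs_self _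
      _ = |A i j| * (|v i| * |v j|) := by rw [abs_mul, abs_mul]; ring
      _ ≤ |A i j| * (|v i| * |v i|) := mul_le_mul_of_nonneg_left
          (mul_le_mul_of_nonneg_left (hmax j) (abs_nonneg _)) (abs_nonneg _)
      _ = |A i j| * v i ^ 2 := by rw [abs_mul_abs_self, sq]
  have hsum : ∑ j, v i * A i j * v j = v i ^ 2 :=
    calc ∑ j, v i * A i j * v j = v i * (A *ᵥ v) i := by
          simp only [mulVec, dotProduct, Finset.mul_sum, mul_assoc]
      _ = v i ^ 2 := by rw [hv, sq]
  have hzero : ∑ j, (|A i j| * v i ^ 2 - v i * A i j * v j) = 0 := by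
    refine le_antisymm ?_ (Finset.sum_nonneg fun j _ => sub_nonneg.mpr (hterm j))
    rw [Finset.sum_sub_distrib, hsum, ← Finset.sum_mul]
    nlinarith [hrow i, sq_nonneg (v i)]
  have := (Finset.sum_eq_zero_iff_of_nonneg fun j _ => sub_nonneg.mpr (hterm j)).mp hzero j
    (Finset.mem_univ j)
  linarith

lemma mulVec_eq_self_of_sign {A : Matrix ι ι ℝ} (hrow : ∀ i, ∑ j, |A i j| = 1)
    {s : ι → ℝ} (hs : ∀ i, |s i| = 1) (h : ∀ i j, 0 ≤ s i * A i j * s j) : A *ᵥ s = s := by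
  funext i
  have hterm : ∀ j, A i j * s j = s i * |A i j| := fun j => by
    have hsq : s i * s i = 1 := by rw [← abs_mul_abs_self, hs]; simp
    calc A i j * s j = s i * (s i * A i j * s j) := by linear_combination (-(A i j * s j)) * hsq
      _ = s i * |s i * A i j * s j| := by rw [abs_of_nonneg (h i j)]
      _ = s i * |A i j| := by simp [abs_mul, hs]
  simp only [mulVec, dotProduct, hterm, ← Finset.mul_sum, hrow, mul_one]

end Matrix

lemma absMat_apply_nonneg (A : Matrix (Fin n) (Fin n) ℝ) (i j : Fin n) : 0 ≤ absMat A i j :=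
  abs_nonneg _

lemma absMat_apply_pos {A : Matrix (Fin n) (Fin n) ℝ} {i j : Fin n} :
    0 < absMat A i j ↔ A i j ≠ 0 :=
  abs_pos

lemma absMat_neg (A : Matrix (Fin n) (Fin n) ℝ) : absMat (-A) = absMat A := by
  ext i j; simp [absMat]

section SignedInteraction

variable {A : Matrix (Fin n) (Fin n) ℝ}

lemma revOppBip_iff_oppBip_neg : RevOppBip A ↔ OppBip (-A) := by
  simp only [RevOppBip, OppBip, Matrix.neg_apply, neg_nonneg, neg_nonpos]

lemma StronglyConnected.neg (hsc : StronglyConnected A) : StronglyConnected (-A) := by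
  simpa only [StronglyConnected, absMat_neg] using hsc

lemma StronglyConnected.forall_of_closed (hsc : StronglyConnected A) {T : Fin n → Prop}
    (hT : ∀ i j, A i j ≠ 0 → T i → T j) {i : Fin n} (hi : T i) (j : Fin n) : T j :=
  let ⟨_, _, hk⟩ := hsc i j
  imp_of_pow_apply_pos (absMat_apply_nonneg A) (fun i j h => hT i j (absMat_apply_pos.mp h)) hk hi

lemma StronglyConnected.abs_apply_eq_of_mulVec_eq_self (hsc : StronglyConnected A)
    (hrow : ∀ i, ∑ j, |A i j| ≤ 1) {v : Fin n → ℝ} (hv : A *ᵥ v = v) (i j : Fin n) :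
    |v i| = |v j| := by
  obtain ⟨m, -, hmax⟩ := Finset.exists_max_image Finset.univ (fun j => |v j|) ⟨i, by simp⟩
  have hall : ∀ j, |v j| = |v m| := by
    refine hsc.forall_of_closed (fun a b hab ha => ?_) (rfl : |v m| = |v m|)
    have hmax' : ∀ j, |v j| ≤ |v a| := fun j => ha ▸ hmax j (by simp)
    have h := congrArg abs (mul_apply_mul_eq_of_forall_abs_le hrow hv hmax' b)
    simp only [abs_mul, abs_abs, sq] at h
    have hab' : |v a| * |v b| = |v a| * |v a| :=
      mul_left_cancel₀ (abs_ne_zero.mpr hab) (by linear_combination h)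
    rw [← ha]
    rcases (abs_nonneg (v a)).eq_or_lt with h0 | h0
    · exact le_antisymm (hmax' b) (h0 ▸ abs_nonneg (v b))
    · exact mul_left_cancel₀ h0.ne' hab'
  rw [hall i, hall j]


lemma oppBip_of_mul_nonneg {v : Fin n → ℝ} (hv : ∀ i, v i ≠ 0)
    (h : ∀ i j, 0 ≤ v i * A i j * v j) : OppBip A := by
  have hA : ∀ i j, 0 ≤ A i j * (v i * v j) := fun i j => by linear_combination h i j
  have hneg : ∀ i, ¬ 0 < v i → v i < 0 := fun i hi => (not_lt.mp hi).lt_of_ne (hv i)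
  refine ⟨{i | 0 < v i}, fun i j => ⟨?_, ?_⟩⟩ <;> rintro (⟨hi, hj⟩ | ⟨hi, hj⟩)
  · exact nonneg_of_mul_nonneg_left (hA i j) (mul_pos hi hj)
  · exact nonneg_of_mul_nonneg_left (hA i j) (mul_pos_of_neg_of_neg (hneg i hi) (hneg j hj))
  · exact nonpos_of_mul_nonneg_left (hA i j) (mul_neg_of_pos_of_neg hi (hneg j hj))
  · exact nonpos_of_mul_nonneg_left (hA i j) (mul_neg_of_neg_of_pos (hneg i hi) hj)

lemma oppBip_of_mulVec_eq_self (hsc : StronglyConnected A) (hrow : ∀ i, ∑ j, |A i j| ≤ 1)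
    {v : Fin n → ℝ} (hv : A *ᵥ v = v) (hv0 : v ≠ 0) : OppBip A := by
  obtain ⟨i₀, hi₀⟩ := Function.ne_iff.mp hv0
  have habs := hsc.abs_apply_eq_of_mulVec_eq_self hrow hv
  refine oppBip_of_mul_nonneg (v := v) (fun i => abs_ne_zero.mp ((habs i i₀).trans_ne
    (abs_ne_zero.mpr hi₀))) fun i j => ?_
  rw [mul_apply_mul_eq_of_forall_abs_le hrow hv (fun j => (habs j i).le)]
  positivity

lemma OppBip.exists_sign (h : OppBip A) :
    ∃ s : Fin n → ℝ, (∀ i, |s i| = 1) ∧ ∀ i j, 0 ≤ s i * A i j * s j := by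
  classical
  obtain ⟨S, hS⟩ := h
  refine ⟨fun i => if i ∈ S then 1 else -1, fun i => by dsimp only; split_ifs <;> simp,
    fun i j => ?_⟩
  by_cases hi : i ∈ S <;> by_cases hj : j ∈ S <;> simp only [hi, hj, if_true, if_false]
  · simpa using (hS i j).1 (Or.inl ⟨hi, hj⟩)
  · simpa using (hS i j).2 (Or.inl ⟨hi, hj⟩)
  · simpa using (hS i j).2 (Or.inr ⟨hi, hj⟩)
  · simpa using (hS i j).1 (Or.inr ⟨hi, hj⟩)

lemma Aperiodic.not_forall_eq_neg [Nonempty (Fin n)] (hap : Aperiodic A) {f : Fin n → ℝ}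
    (hf : ∀ i, f i ≠ 0) : ¬ ∀ i j, A i j ≠ 0 → f j = -f i := by
  intro hflip
  obtain ⟨i⟩ := ‹Nonempty (Fin n)›
  refine absurd (hap i 2 fun k _ hk => ?_) (by norm_num)
  have hcycle := apply_eq_neg_one_pow_mul_of_pow_apply_pos (absMat_apply_nonneg A)
    (fun i j h => hflip i j (absMat_apply_pos.mp h)) hk
  have hpow : ((-1 : ℝ) ^ k) = 1 := mul_right_cancel₀ (hf i) (by linear_combination -hcycle)
  exact even_iff_two_dvd.mp ((neg_one_pow_eq_one_iff_even (by norm_num)).mp hpow)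

lemma OppBip.not_revOppBip [Nonempty (Fin n)] (hap : Aperiodic A) (hO : OppBip A) :
    ¬ RevOppBip A := by
  rw [revOppBip_iff_oppBip_neg]
  intro hR
  obtain ⟨s, hs1, hs⟩ := hO.exists_sign
  obtain ⟨r, hr1, hr⟩ := hR.exists_sign
  set t : Fin n → ℝ := fun i => s i * r i
  have ht1 : ∀ i, |t i| = 1 := fun i => by simp [t, abs_mul, hs1, hr1]
  refine hap.not_forall_eq_neg (f := t) (fun i => abs_ne_zero.mp (by simp [ht1])) fun i j hij => ?_
  have hsq : t i * t i = 1 := by rw [← abs_mul_abs_self, ht1, one_mul]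
  have hprod : t i * t j = -1 := by
    have hnonpos : A i j ^ 2 * (t i * t j) ≤ 0 := by
      have := mul_nonneg (hs i j) (hr i j)
      simp only [Matrix.neg_apply] at this
      linear_combination this
    have hle : t i * t j ≤ 0 := nonpos_of_mul_nonpos_right hnonpos (sq_pos_of_ne_zero hij)
    have := abs_of_nonpos hle
    rw [abs_mul, ht1, ht1] at this
    linarith
  linear_combination (-t j) * hsq + t i * hprod

lemma eigenvalues_mem_Ioc_of_not_revOppBip (hA : A.IsHermitian) (hsc : StronglyConnected A)
    (hrow : ∀ i, ∑ j, |A i j| ≤ 1) (hR : ¬ RevOppBip A) (k : Fin n) :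
    hA.eigenvalues k ∈ Set.Ioc (-1) 1 := by
  have hu : ⇑(hA.eigenvectorBasis k) ≠ 0 := by
    simpa using hA.eigenvectorBasis.orthonormal.ne_zero k
  have hAu := hA.mulVec_eigenvectorBasis k
  obtain ⟨hlo, hhi⟩ := abs_le.mp (abs_le_one_of_mulVec_eq_smul hrow hu hAu)
  refine ⟨hlo.lt_of_ne fun h => hR ?_, hhi⟩
  refine revOppBip_iff_oppBip_neg.mpr
    (oppBip_of_mulVec_eq_self hsc.neg (by simpa using hrow) ?_ hu)
  rw [neg_mulVec, hAu, ← h, neg_one_smul, neg_neg]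

lemma exists_tendsto_pow_mulVec_of_not_revOppBip (hsym : A.IsSymm) (hsc : StronglyConnected A)
    (hrow : ∀ i, ∑ j, |A i j| ≤ 1) (hR : ¬ RevOppBip A) (b : Fin n → ℝ) :
    ∃ L, Tendsto (fun t => (A ^ t) *ᵥ b) atTop (𝓝 L) :=
  have hA := isHermitian_iff_isSymm.mpr hsym
  hA.exists_tendsto_pow_mulVec (eigenvalues_mem_Ioc_of_not_revOppBip hA hsc hrow hR) b

lemma isPolarization_of_abs_eq {p : Fin n → ℝ} (h : ∀ i j, |p i| = |p j|) : IsPolarization p := by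
  rcases isEmpty_or_nonempty (Fin n) with _ | ⟨⟨i₀⟩⟩
  · exact ⟨0, 0, isEmptyElim⟩
  · exact ⟨p i₀, -p i₀, fun i => abs_eq_abs.mp (h i i₀)⟩

lemma inducesNontrivialPolarization_of_oppBip [Nonempty (Fin n)] (hsym : A.IsSymm)
    (hrow : ∀ i, ∑ j, |A i j| = 1) (hsc : StronglyConnected A) (hap : Aperiodic A)
    (hO : OppBip A) : InducesNontrivialPolarization A := by
  have hrow' : ∀ i, ∑ j, |A i j| ≤ 1 := fun i => (hrow i).le
  refine ⟨fun b => ?_, ?_⟩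
  · obtain ⟨L, hL⟩ := exists_tendsto_pow_mulVec_of_not_revOppBip hsym hsc hrow'
      (hO.not_revOppBip hap) b
    exact ⟨L, hL, isPolarization_of_abs_eq
      (hsc.abs_apply_eq_of_mulVec_eq_self hrow' (mulVec_eq_self_of_tendsto_pow_mulVec hL))⟩
  · obtain ⟨s, hs1, hs⟩ := hO.exists_sign
    have hfix : A *ᵥ s = (1 : ℝ) • s := by
      rw [one_smul]; exact mulVec_eq_self_of_sign hrow hs1 hs
    refine ⟨s, s, ?_, fun h0 => ?_⟩
    · simp only [pow_mulVec_eq_of_mulVec_eq_smul hfix, one_pow, one_smul, tendsto_const_nhds]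
    · obtain ⟨i⟩ := ‹Nonempty (Fin n)›
      simpa [h0] using hs1 i

lemma divergent_of_revOppBip [Nonempty (Fin n)] (hrow : ∀ i, ∑ j, |A i j| = 1)
    (hR : RevOppBip A) : Divergent A := by
  obtain ⟨s, hs1, hs⟩ := (revOppBip_iff_oppBip_neg.mp hR).exists_sign
  have hneg : (-A) *ᵥ s = s := mulVec_eq_self_of_sign (by simpa using hrow) hs1 hs
  have hflip : A *ᵥ s = (-1 : ℝ) • s := by
    rw [neg_one_smul, ← neg_eq_iff_eq_neg, ← neg_mulVec, hneg]
  refine ⟨s, fun ⟨L, hL⟩ => ?_⟩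
  have heven : Tendsto (fun t => (A ^ (2 * t)) *ᵥ s) atTop (𝓝 L) :=
    hL.comp (strictMono_mul_left_of_pos two_pos).tendsto_atTop
  have hconst : ∀ t, (A ^ (2 * t)) *ᵥ s = s := fun t => by
    rw [pow_mulVec_eq_of_mulVec_eq_smul hflip, pow_mul, neg_one_sq, one_pow, one_smul]
  simp only [hconst] at heven
  have hLs : L = s := tendsto_nhds_unique heven tendsto_const_nhds
  have hfix := mulVec_eq_self_of_tendsto_pow_mulVec hL
  rw [hLs, hflip, neg_one_smul] at hfix
  obtain ⟨i⟩ := ‹Nonempty (Fin n)›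
  simpa [self_eq_neg.mp hfix.symm] using hs1 i

lemma neutralConsensus_of_not_oppBip_of_not_revOppBip (hsym : A.IsSymm)
    (hrow : ∀ i, ∑ j, |A i j| ≤ 1) (hsc : StronglyConnected A) (hO : ¬ OppBip A)
    (hR : ¬ RevOppBip A) : NeutralConsensus A := by
  intro b
  obtain ⟨L, hL⟩ := exists_tendsto_pow_mulVec_of_not_revOppBip hsym hsc hrow hR b
  obtain rfl : L = 0 := by
    by_contra hL0
    exact hO (oppBip_of_mulVec_eq_self hsc hrow (mulVec_eq_self_of_tendsto_pow_mulVec hL) hL0)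
  exact hL

lemma InducesNontrivialPolarization.not_divergent (h : InducesNontrivialPolarization A) :
    ¬ Divergent A :=
  fun ⟨b, hb⟩ => hb ((h.1 b).imp fun _ hL => hL.1)

lemma NeutralConsensus.not_divergent (h : NeutralConsensus A) : ¬ Divergent A :=
  fun ⟨b, hb⟩ => hb ⟨0, h b⟩

lemma NeutralConsensus.not_inducesNontrivialPolarization (h : NeutralConsensus A) :
    ¬ InducesNontrivialPolarization A :=
  fun ⟨_, b, _, hL, hL0⟩ => hL0 (tendsto_nhds_unique hL (h b))

end SignedInteraction

theorem stmt_9_general (n : ℕ) (hn : 2 ≤ n) (A : Matrix (Fin n) (Fin n) ℝ)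
    (hsym : A.IsSymm) (hrow : ∀ i, ∑ j, |A i j| = 1)
    (hsc : StronglyConnected A) (hap : Aperiodic A) :
    (InducesNontrivialPolarization A ↔ OppBip A) ∧
    (Divergent A ↔ RevOppBip A) ∧
    (NeutralConsensus A ↔ (¬ OppBip A ∧ ¬ RevOppBip A)) := by
  have : Nonempty (Fin n) := ⟨⟨0, by omega⟩⟩
  by_cases hO : OppBip A
  · have hP := inducesNontrivialPolarization_of_oppBip hsym hrow hsc hap hO
    exact ⟨iff_of_true hP hO, iff_of_false hP.not_divergent (hO.not_revOppBip hap),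
      iff_of_false (fun hN => hN.not_inducesNontrivialPolarization hP) fun h => h.1 hO⟩
  by_cases hR : RevOppBip A
  · have hD := divergent_of_revOppBip hrow hR
    exact ⟨iff_of_false (fun hP => hP.not_divergent hD) hO, iff_of_true hD hR,
      iff_of_false (fun hN => hN.not_divergent hD) fun h => h.2 hR⟩
  · have hN := neutralConsensus_of_not_oppBip_of_not_revOppBip hsym (fun i => (hrow i).le) hsc
      hO hR
    exact ⟨iff_of_false hN.not_inducesNontrivialPolarization hO,
      iff_of_false hN.not_divergent hR, iff_of_true hN ⟨hO, hR⟩⟩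

/-- trichotomy for strongly connected aperiodic signed
interaction matrices. -/
theorem stmt_9 (n : ℕ) (hn : 2 ≤ n) (A : Matrix (Fin n) (Fin n) ℝ)
    (hsym : A.IsSymm) (hdiag : ∀ i, A i i = 0) (hrow : ∀ i, ∑ j, |A i j| = 1)
    (hsc : StronglyConnected A) (hap : Aperiodic A) :
    (InducesNontrivialPolarization A ↔ OppBip A) ∧
    (Divergent A ↔ RevOppBip A) ∧
    (NeutralConsensus A ↔ (¬ OppBip A ∧ ¬ RevOppBip A)) :=
  stmt_9_general n hn A hsym hrow hsc hap
end

section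
/- Let A be a strongly connected signed interaction matrix. If A is periodic, then A is opposition bipartite if and only if A is reverse opposition bipartite; if A is aperiodic, then A cannot be both opposition bipartite and reverse opposition bipartite. -/
/-!
Join `i` and `j` whenever `A i j ≠ 0`. If `S` is an opposition partition and `S'` a reverse one,
every edge lies within one of them and across the other, so `i ↦ (i ∈ S ↔ i ∈ S')` is a proper
2-colouring: all closed walks have even length and `A` is periodic. Conversely, by symmetry every
edge gives a closed walk of length 2, so a period `d ≠ 1` must be 2. The parity of the walks from a
fixed vertex is then well defined, the vertices at odd distance form one side `T` of a
bipartition, and flipping a partition by `T` exchanges opposition with reverse opposition.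
-/

open Filter

variable {n : ℕ}

namespace Matrix

def IsBipartition {ι R : Type*} [Zero R] [LT R] (M : Matrix ι ι R) (T : Set ι) : Prop :=
  ∀ i j, 0 < M i j → (i ∈ T ↔ j ∉ T)

variable {ι R : Type*} [Fintype ι] [DecidableEq ι] [CommSemiring R] [LinearOrder R]
  [IsStrictOrderedRing R] {M : Matrix ι ι R}

lemma pow_add_apply_pos (hM : ∀ i j, 0 ≤ M i j) {a b : ℕ} {i l j : ι}
    (ha : 0 < (M ^ a) i l) (hb : 0 < (M ^ b) l j) : 0 < (M ^ (a + b)) i j := by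
  rw [pow_add, mul_apply]
  exact (mul_pos ha hb).trans_le <| Finset.single_le_sum
    (fun c _ => mul_nonneg (pow_apply_nonneg hM a i c) (pow_apply_nonneg hM b c j))
    (Finset.mem_univ l)

lemma exists_pow_apply_pos_of_pow_succ_apply_pos (hM : ∀ i j, 0 ≤ M i j) {k : ℕ} {i j : ι}
    (h : 0 < (M ^ (k + 1)) i j) : ∃ l, 0 < (M ^ k) i l ∧ 0 < M l j := by
  rw [pow_succ, mul_apply, Finset.sum_pos_iff_of_nonneg
    fun l _ => mul_nonneg (pow_apply_nonneg hM k i l) (hM l j)] at h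
  obtain ⟨l, -, hl⟩ := h
  exact ⟨l, pos_of_mul_pos_left hl (hM l j), pos_of_mul_pos_right hl (pow_apply_nonneg hM k i l)⟩

lemma IsBipartition.even_iff_of_pow_apply_pos (hM : ∀ i j, 0 ≤ M i j) {T : Set ι}
    (hT : M.IsBipartition T) {k : ℕ} {i j : ι} (h : 0 < (M ^ k) i j) :
    Even k ↔ (i ∈ T ↔ j ∈ T) := by
  induction k generalizing j with
  | zero =>
    obtain rfl : i = j := by
      by_contra hij
      simp [one_apply_ne hij] at h
    simp
  | succ k ih =>
    obtain ⟨l, hil, hlj⟩ := exists_pow_apply_pos_of_pow_succ_apply_pos hM h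
    have hl := hT l j hlj
    rw [Nat.even_add_one, ih hil]
    tauto

lemma IsSymm.exists_isBipartition (hM : ∀ i j, 0 ≤ M i j) (hsym : M.IsSymm) {i₀ : ι}
    (hreach : ∀ j, ∃ k, 0 < (M ^ k) i₀ j) (heven : ∀ k, 0 < (M ^ k) i₀ i₀ → Even k) :
    ∃ T, M.IsBipartition T := by
  have hparity {a b : ℕ} {j : ι} (ha : 0 < (M ^ a) i₀ j) (hb : 0 < (M ^ b) i₀ j) :
      Even a ↔ Even b := by
    rw [(hsym.pow b).apply j i₀] at hb
    exact Nat.even_add.mp (heven _ (pow_add_apply_pos hM ha hb))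
  set T := {j | ∃ k, Odd k ∧ 0 < (M ^ k) i₀ j}
  have hmem {a : ℕ} {j : ι} (ha : 0 < (M ^ a) i₀ j) : j ∈ T ↔ Odd a := by
    refine ⟨fun ⟨b, hb, hbj⟩ => ?_, fun hodd => ⟨a, hodd, ha⟩⟩
    simpa only [← Nat.not_even_iff_odd, hparity ha hbj] using hb
  refine ⟨T, fun i j hij => ?_⟩
  obtain ⟨a, ha⟩ := hreach i
  rw [hmem ha, hmem (pow_add_apply_pos hM ha (by rwa [pow_one] : 0 < (M ^ 1) i j)),
    Nat.odd_add_one, not_not]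

end Matrix

open Matrix

variable {A : Matrix (Fin n) (Fin n) ℝ}

lemma absMat_nonneg (i j : Fin n) : 0 ≤ absMat A i j := abs_nonneg _

lemma Matrix.IsSymm.absMat (hsym : A.IsSymm) : (absMat A).IsSymm := hsym.map _

lemma isBipartition_absMat_iff {T : Set (Fin n)} :
    (absMat A).IsBipartition T ↔ ∀ i j, A i j ≠ 0 → (i ∈ T ↔ j ∉ T) := by
  simp only [IsBipartition, absMat, map_apply, abs_pos]

lemma oppBip_iff :
    OppBip A ↔ ∃ S : Set (Fin n), ∀ i j, A i j ≠ 0 → (0 < A i j ↔ (i ∈ S ↔ j ∈ S)) :=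
  exists_congr fun S => forall₂_congr fun i j => by grind

lemma revOppBip_iff :
    RevOppBip A ↔ ∃ S : Set (Fin n), ∀ i j, A i j ≠ 0 → (0 < A i j ↔ ¬(i ∈ S ↔ j ∈ S)) :=
  exists_congr fun S => forall₂_congr fun i j => by grind

lemma exists_isBipartition_of_oppBip_of_revOppBip (hopp : OppBip A) (hrev : RevOppBip A) :
    ∃ T, (absMat A).IsBipartition T := by
  obtain ⟨S, hS⟩ := oppBip_iff.mp hopp
  obtain ⟨S', hS'⟩ := revOppBip_iff.mp hrev
  refine ⟨{i | i ∈ S ↔ i ∈ S'}, isBipartition_absMat_iff.mpr fun i j hij => ?_⟩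
  have hSij := hS i j hij
  have hS'ij := hS' i j hij
  simp only [Set.mem_ofPred_eq]
  tauto

lemma oppBip_iff_revOppBip_of_isBipartition {T : Set (Fin n)}
    (hT : (absMat A).IsBipartition T) : OppBip A ↔ RevOppBip A := by
  have hflip (S : Set (Fin n)) {i j : Fin n} (hij : A i j ≠ 0) :
      ((i ∈ S ↔ i ∈ T) ↔ (j ∈ S ↔ j ∈ T)) ↔ ¬(i ∈ S ↔ j ∈ S) := by
    have hij' := isBipartition_absMat_iff.mp hT i j hij
    tauto
  rw [oppBip_iff, revOppBip_iff]
  constructor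
  · rintro ⟨S, hS⟩
    exact ⟨{i | i ∈ S ↔ i ∈ T}, fun i j hij => by
      simp only [Set.mem_ofPred_eq, hflip S hij, not_not, hS i j hij]⟩
  · rintro ⟨S, hS⟩
    exact ⟨{i | i ∈ S ↔ i ∈ T}, fun i j hij => by
      simp only [Set.mem_ofPred_eq, hflip S hij, hS i j hij]⟩

lemma not_aperiodic_of_isBipartition (i₀ : Fin n) {T : Set (Fin n)}
    (hT : (absMat A).IsBipartition T) : ¬ Aperiodic A := by
  intro hap
  have : 2 = 1 := hap i₀ 2 fun _ _ hk =>
    ((hT.even_iff_of_pow_apply_pos absMat_nonneg hk).mpr Iff.rfl).two_dvd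
  omega

lemma exists_even_closed_walks_of_not_aperiodic (hsym : A.IsSymm) (hsc : StronglyConnected A)
    (hper : ¬ Aperiodic A) : ∃ i₀, ∀ k, 0 < (absMat A ^ k) i₀ i₀ → Even k := by
  simp only [Aperiodic, not_forall] at hper
  obtain ⟨i₀, d, hd, hd1⟩ := hper
  obtain ⟨k, hk, hpos⟩ := hsc i₀ i₀
  obtain ⟨k, rfl⟩ := Nat.exists_eq_add_of_le' hk
  obtain ⟨l, -, hl⟩ := exists_pow_apply_pos_of_pow_succ_apply_pos absMat_nonneg hpos
  have hl' : 0 < (absMat A ^ 1) i₀ l := by rwa [pow_one, hsym.absMat.apply l i₀]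
  have hloop : 0 < (absMat A ^ 2) i₀ i₀ := pow_add_apply_pos absMat_nonneg hl' (by rwa [pow_one])
  obtain rfl : d = 2 :=
    (Nat.prime_two.eq_one_or_self_of_dvd d (hd 2 one_le_two hloop)).resolve_left hd1
  refine ⟨i₀, fun k hk => ?_⟩
  rcases Nat.eq_zero_or_pos k with rfl | hk0
  · exact Even.zero
  · exact even_iff_two_dvd.mpr (hd k hk0 hk)

theorem stmt_10_general (n : ℕ) (hn : 2 ≤ n) (A : Matrix (Fin n) (Fin n) ℝ)
    (hsym : A.IsSymm)
    (hsc : StronglyConnected A) :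
    (¬ Aperiodic A → (OppBip A ↔ RevOppBip A)) ∧
    (Aperiodic A → ¬ (OppBip A ∧ RevOppBip A)) := by
  refine ⟨fun hper => ?_, fun hap ⟨hopp, hrev⟩ => ?_⟩
  · obtain ⟨i₀, heven⟩ := exists_even_closed_walks_of_not_aperiodic hsym hsc hper
    obtain ⟨T, hT⟩ := hsym.absMat.exists_isBipartition absMat_nonneg
      (fun j => (hsc i₀ j).imp fun _ => And.right) heven
    exact oppBip_iff_revOppBip_of_isBipartition hT
  · obtain ⟨T, hT⟩ := exists_isBipartition_of_oppBip_of_revOppBip hopp hrev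
    exact not_aperiodic_of_isBipartition ⟨0, by omega⟩ hT hap

/-- for a strongly connected signed interaction matrix,
periodicity makes opposition bipartiteness and reverse opposition
bipartiteness coincide; under aperiodicity they cannot both hold. -/
theorem stmt_10 (n : ℕ) (hn : 2 ≤ n) (A : Matrix (Fin n) (Fin n) ℝ)
    (hsym : A.IsSymm) (hdiag : ∀ i, A i i = 0) (hrow : ∀ i, ∑ j, |A i j| = 1)
    (hsc : StronglyConnected A) :
    (¬ Aperiodic A → (OppBip A ↔ RevOppBip A)) ∧
    (Aperiodic A → ¬ (OppBip A ∧ RevOppBip A)) :=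
  stmt_10_general n hn A hsym hsc
end

section
/- Let A be a strongly connected signed interaction matrix. Then the following are equivalent: (i) there exist a vector s ∈ ℝ^n with sᵀ·|A| = sᵀ and Σ_j s_j = 1 (s being the unique such left eigenvector of |A|) and a sign assignment g : {1,…,n} → {−1, 1} such that for every initial vector b₀ ∈ ℝ^n and every agent i, lim_{t→∞} (A^t b₀)_i = g(i) · Σ_{j=1}^n g(j)·s_j·(b₀)_j (so every agent's limiting opinion is one of the two values ±Σ_j g(j)s_j(b₀)_j); (ii) A is opposition bipartite and aperiodic. -/
open Filter

variable {n : ℕ}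

/-!
Put `M = |A|`, a symmetric doubly stochastic matrix. `A` is opposition bipartite exactly when
`A = D M D` for a diagonal sign matrix `D = diagonal g`, and then `A ^ t = D M ^ t D`.

If `A` is also aperiodic, `M` is primitive: symmetry makes every even power have a positive
diagonal, aperiodicity supplies an odd closed walk, and strong connectivity spreads positivity to
all entries of some `M ^ m`. Each block of `m` steps then shrinks the oscillation `max - min` of
`M ^ t v` by the factor `1 - 2 min (M ^ m)`, while the sum of `v` is preserved, so `M ^ t v`
tends to the constant vector at the average of `v`; hence `s = 1 / n`.

Conversely, the limits in (i) say that `B = D A D` has `B ^ t → 𝟙 sᵀ`, so `B 𝟙 sᵀ = 𝟙 sᵀ`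
forces the rows of `B` to sum to `1`. Since `|B| = M` has the same row sums, `B = M`. Finally
`(M ^ t) i i → s i ≥ 1 / n` by Cauchy–Schwarz on `(M ^ 2k) i i = ∑ j, (M ^ k) i j ^ 2`, so
`(M ^ t) i i > 0` for all large `t`, which gives aperiodicity.
-/

open Matrix

section Oscillation

variable {ι : Type*} [Fintype ι]

noncomputable def osc (v : ι → ℝ) : ℝ := (⨆ i, v i) - ⨅ i, v i

lemma le_ciSup_of_finite (v : ι → ℝ) (i : ι) : v i ≤ ⨆ i, v i :=
  le_ciSup (Set.finite_range v).bddAbove i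

lemma ciInf_le_of_finite (v : ι → ℝ) (i : ι) : ⨅ i, v i ≤ v i :=
  ciInf_le (Set.finite_range v).bddBelow i

lemma osc_nonneg [Nonempty ι] (v : ι → ℝ) : 0 ≤ osc v := by
  obtain ⟨i⟩ := ‹Nonempty ι›
  have := (ciInf_le_of_finite v i).trans (le_ciSup_of_finite v i)
  unfold osc; linarith

lemma mulVec_apply_le_sub_mul {P : Matrix ι ι ℝ} (hP : ∀ i j, 0 ≤ P i j)
    (hr : ∀ i, ∑ j, P i j = 1) {v : ι → ℝ} {c : ℝ} (hv : ∀ k, v k ≤ c) (i j : ι) :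
    (P *ᵥ v) i ≤ c - P i j * (c - v j) := by
  have hsplit : (P *ᵥ v) i = c - ∑ k, P i k * (c - v k) := by
    simp only [mulVec, dotProduct, mul_sub, Finset.sum_sub_distrib, ← Finset.sum_mul, hr i]
    ring
  rw [hsplit]
  exact sub_le_sub_left (Finset.single_le_sum (fun k _ => mul_nonneg (hP i k)
    (sub_nonneg.2 (hv k))) (Finset.mem_univ j)) c

lemma osc_mulVec_le [Nonempty ι] {P : Matrix ι ι ℝ} {ε : ℝ} (hε : ∀ i j, ε ≤ P i j)
    (hε₀ : 0 ≤ ε) (hr : ∀ i, ∑ j, P i j = 1) (v : ι → ℝ) :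
    osc (P *ᵥ v) ≤ (1 - 2 * ε) * osc v := by
  have hP : ∀ i j, 0 ≤ P i j := fun i j => hε₀.trans (hε i j)
  set S := ⨆ i, v i
  set I := ⨅ i, v i
  have hIS : 0 ≤ S - I := osc_nonneg v
  obtain ⟨jmin, hjmin⟩ := exists_eq_ciInf_of_finite (f := v)
  obtain ⟨jmax, hjmax⟩ := exists_eq_ciSup_of_finite (f := v)
  have hupper : ∀ i, (P *ᵥ v) i ≤ S - ε * (S - I) := fun i => by
    have := mulVec_apply_le_sub_mul hP hr (le_ciSup_of_finite v) i jmin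
    rw [hjmin] at this
    linarith [mul_le_mul_of_nonneg_right (hε i jmin) hIS]
  have hlower : ∀ i, I + ε * (S - I) ≤ (P *ᵥ v) i := fun i => by
    have := mulVec_apply_le_sub_mul hP hr (v := -v) (c := -I)
      (fun k => neg_le_neg (ciInf_le_of_finite v k)) i jmax
    rw [mulVec_neg, Pi.neg_apply, Pi.neg_apply, hjmax] at this
    linarith [mul_le_mul_of_nonneg_right (hε i jmax) hIS]
  have := ciSup_le hupper
  have := le_ciInf hlower
  unfold osc; linarith

lemma abs_sub_le_osc [Nonempty ι] {v : ι → ℝ} {μ : ℝ} (hlo : ⨅ i, v i ≤ μ) (hhi : μ ≤ ⨆ i, v i)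
    (i : ι) : |v i - μ| ≤ osc v := by
  have := le_ciSup_of_finite v i
  have := ciInf_le_of_finite v i
  unfold osc
  rw [abs_le]; constructor <;> linarith

lemma iInf_le_average [Nonempty ι] (v : ι → ℝ) : ⨅ i, v i ≤ (∑ i, v i) / Fintype.card ι := by
  rw [le_div_iff₀ (by exact_mod_cast Fintype.card_pos), mul_comm, ← nsmul_eq_mul,
    ← Finset.card_univ, ← Finset.sum_const]
  exact Finset.sum_le_sum fun i _ => ciInf_le_of_finite v i

lemma average_le_iSup [Nonempty ι] (v : ι → ℝ) : (∑ i, v i) / Fintype.card ι ≤ ⨆ i, v i := by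
  rw [div_le_iff₀ (by exact_mod_cast Fintype.card_pos), mul_comm, ← nsmul_eq_mul,
    ← Finset.card_univ, ← Finset.sum_const]
  exact Finset.sum_le_sum fun i _ => le_ciSup_of_finite v i

end Oscillation

lemma tendsto_zero_of_antitone_of_le_mul {d : ℕ → ℝ} (hanti : Antitone d) (hnonneg : ∀ t, 0 ≤ d t)
    {m : ℕ} {r : ℝ} (hr : r < 1) (hcontr : ∀ t, d (t + m) ≤ r * d t) :
    Tendsto d atTop (nhds 0) := by
  obtain ⟨L, hL⟩ : ∃ L, Tendsto d atTop (nhds L) :=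
    ⟨_, tendsto_atTop_ciInf hanti ⟨0, Set.forall_mem_range.2 hnonneg⟩⟩
  have hL0 : 0 ≤ L := ge_of_tendsto' hL hnonneg
  have hLr : L ≤ r * L :=
    le_of_tendsto_of_tendsto' (hL.comp (tendsto_add_atTop_nat m)) (hL.const_mul r) hcontr
  have : L = 0 := by nlinarith
  rwa [this] at hL

section DoublyStochastic

variable {ι : Type*} [Fintype ι] [DecidableEq ι] {M : Matrix ι ι ℝ}

lemma pow_add_apply_pos (hM : M ∈ doublyStochastic ℝ ι) {a b : ℕ} {i l j : ι}
    (ha : 0 < (M ^ a) i l) (hb : 0 < (M ^ b) l j) : 0 < (M ^ (a + b)) i j := by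
  rw [pow_add, mul_apply]
  exact (mul_pos ha hb).trans_le <| Finset.single_le_sum (f := fun x => (M ^ a) i x * (M ^ b) x j)
    (fun x _ => mul_nonneg (nonneg_of_mem_doublyStochastic (pow_mem hM a))
      (nonneg_of_mem_doublyStochastic (pow_mem hM b))) (Finset.mem_univ l)

lemma inv_card_le_pow_two_mul_apply_self (hM : M ∈ doublyStochastic ℝ ι) (hsym : M.IsSymm)
    (k : ℕ) (i : ι) : (Fintype.card ι : ℝ)⁻¹ ≤ (M ^ (2 * k)) i i := by
  have hsq : (M ^ (2 * k)) i i = ∑ j, (M ^ k) i j ^ 2 := by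
    rw [two_mul, pow_add, mul_apply]
    congr! 1 with j
    rw [sq, (hsym.pow k).apply i j]
  have hcs := sq_sum_le_card_mul_sum_sq (s := Finset.univ) (f := fun j => (M ^ k) i j)
  rw [sum_row_of_mem_doublyStochastic (pow_mem hM k), one_pow, Finset.card_univ] at hcs
  have hcard : (0 : ℝ) < Fintype.card ι := by exact_mod_cast Fintype.card_pos_iff.2 ⟨i⟩
  rw [hsq, inv_le_iff_one_le_mul₀' hcard]
  exact hcs

lemma pow_two_mul_apply_self_pos (hM : M ∈ doublyStochastic ℝ ι) (hsym : M.IsSymm) (k : ℕ)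
    (i : ι) : 0 < (M ^ (2 * k)) i i :=
  (inv_pos.2 (by exact_mod_cast Fintype.card_pos_iff.2 ⟨i⟩)).trans_le
    (inv_card_le_pow_two_mul_apply_self hM hsym k i)

lemma eventually_pow_apply_self_pos (hM : M ∈ doublyStochastic ℝ ι) (hsym : M.IsSymm) {i : ι}
    {k : ℕ} (hk : Odd k) (hki : 0 < (M ^ k) i i) : ∀ᶠ t in atTop, 0 < (M ^ t) i i := by
  obtain ⟨c₀, rfl⟩ := hk
  filter_upwards [eventually_ge_atTop (2 * c₀ + 1)] with t ht
  obtain ⟨c, rfl | rfl⟩ := Nat.even_or_odd' t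
  · exact pow_two_mul_apply_self_pos hM hsym c i
  · rw [show 2 * c + 1 = 2 * c₀ + 1 + 2 * (c - c₀) by omega]
    exact pow_add_apply_pos hM hki (pow_two_mul_apply_self_pos hM hsym _ i)

lemma eventually_forall_pow_apply_pos (hM : M ∈ doublyStochastic ℝ ι) (hsym : M.IsSymm)
    (hconn : ∀ i j, ∃ k, 0 < (M ^ k) i j) (hodd : ∀ i, ∃ k, Odd k ∧ 0 < (M ^ k) i i) :
    ∀ᶠ t in atTop, ∀ i j, 0 < (M ^ t) i j := by
  refine eventually_all.2 fun i => eventually_all.2 fun j => ?_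
  obtain ⟨a, ha⟩ := hconn i j
  obtain ⟨k, hk, hki⟩ := hodd i
  filter_upwards [(tendsto_sub_atTop_nat a).eventually
    (eventually_pow_apply_self_pos hM hsym hk hki), eventually_ge_atTop a] with t hdiag hat
  simpa [Nat.sub_add_cancel hat] using pow_add_apply_pos hM hdiag ha

lemma eventually_pow_apply_self_pos_of_tendsto (hM : M ∈ doublyStochastic ℝ ι)
    (hsym : M.IsSymm) {i : ι} {c : ℝ} (hlim : Tendsto (fun t => (M ^ t) i i) atTop (nhds c)) :
    ∀ᶠ t in atTop, 0 < (M ^ t) i i := by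
  have hc : 0 < c := (inv_pos.2 (by exact_mod_cast Fintype.card_pos_iff.2 ⟨i⟩)).trans_le <|
    ge_of_tendsto' (hlim.comp (tendsto_id.const_mul_atTop' two_pos))
      fun k => inv_card_le_pow_two_mul_apply_self hM hsym k i
  exact hlim.eventually (eventually_gt_nhds hc)

lemma tendsto_pow_mulVec_apply_average [Nonempty ι] (hM : M ∈ doublyStochastic ℝ ι) {m : ℕ}
    (hpos : ∀ i j, 0 < (M ^ m) i j) (v : ι → ℝ) (i : ι) :
    Tendsto (fun t => (M ^ t *ᵥ v) i) atTop (nhds ((∑ j, v j) / Fintype.card ι)) := by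
  obtain ⟨⟨i₀, j₀⟩, hmin⟩ := Finite.exists_min fun p : ι × ι => (M ^ m) p.1 p.2
  have hMt : ∀ t, M ^ t ∈ doublyStochastic ℝ ι := fun t => pow_mem hM t
  set w : ℕ → ι → ℝ := fun t => M ^ t *ᵥ v
  have hw : ∀ t s, w (t + s) = M ^ s *ᵥ w t := fun t s => by
    simp only [w, mulVec_mulVec, ← pow_add, add_comm]
  have hosc : Tendsto (fun t => osc (w t)) atTop (nhds 0) := by
    refine tendsto_zero_of_antitone_of_le_mul (m := m) (r := 1 - 2 * (M ^ m) i₀ j₀)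
      (antitone_nat_of_succ_le fun t => ?_) (fun t => osc_nonneg _)
      (by linarith [hpos i₀ j₀]) fun t => ?_
    · rw [hw t 1, pow_one]
      simpa using osc_mulVec_le (fun i j => nonneg_of_mem_doublyStochastic hM) le_rfl
        (sum_row_of_mem_doublyStochastic hM) (w t)
    · rw [hw t m]
      exact osc_mulVec_le (fun i j => hmin (i, j)) (hpos i₀ j₀).le
        (sum_row_of_mem_doublyStochastic (hMt m)) (w t)
  have hsum : ∀ t, ∑ j, w t j = ∑ j, v j := fun t => sum_mulVec_of_mem_doublyStochastic (hMt t)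
  refine tendsto_iff_norm_sub_tendsto_zero.2
    (squeeze_zero (fun _ => norm_nonneg _) (fun t => ?_) hosc)
  rw [Real.norm_eq_abs, ← hsum t]
  exact abs_sub_le_osc (iInf_le_average (w t)) (average_le_iSup (w t)) i

end DoublyStochastic

lemma conj_pow_of_mul_self_eq_one {G : Type*} [Monoid G] {d : G} (hd : d * d = 1) (a : G)
    (t : ℕ) : (d * a * d) ^ t = d * a ^ t * d := by
  have hsemi : SemiconjBy d (d * a * d) a := by
    rw [SemiconjBy, ← mul_assoc, ← mul_assoc, hd, one_mul]
  calc (d * a * d) ^ t = d * (d * (d * a * d) ^ t) := by rw [← mul_assoc, hd, one_mul]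
    _ = d * a ^ t * d := by rw [(hsemi.pow_right t).eq, mul_assoc]

section Signs

variable {ι : Type*} [Fintype ι] [DecidableEq ι] {g : ι → ℝ}

omit [Fintype ι] [DecidableEq ι] in
lemma mul_self_eq_one_of_sign (hg : ∀ i, g i = 1 ∨ g i = -1) (i : ι) : g i * g i = 1 := by
  rcases hg i with h | h <;> simp [h]

lemma diagonal_mul_diagonal_of_sign (hg : ∀ i, g i = 1 ∨ g i = -1) :
    diagonal g * diagonal g = 1 := by
  rw [diagonal_mul_diagonal, ← diagonal_one]
  exact congrArg diagonal (funext (mul_self_eq_one_of_sign hg))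

lemma diagonal_mul_mul_diagonal_apply (A : Matrix ι ι ℝ) (i j : ι) :
    (diagonal g * A * diagonal g) i j = g i * A i j * g j := by
  simp [diagonal_mul, mul_diagonal]

lemma tendsto_diagonal_mul_mul_diagonal_pow_apply (hg : ∀ i, g i = 1 ∨ g i = -1)
    {A : Matrix ι ι ℝ} {s : ι → ℝ}
    (hlim : ∀ i j, Tendsto (fun t => (A ^ t) i j) atTop (nhds (g i * g j * s j))) (i j : ι) :
    Tendsto (fun t => ((diagonal g * A * diagonal g) ^ t) i j) atTop (nhds (s j)) := by
  have hgg := mul_self_eq_one_of_sign hg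
  simp only [conj_pow_of_mul_self_eq_one (diagonal_mul_diagonal_of_sign hg),
    diagonal_mul_mul_diagonal_apply]
  convert ((hlim i j).const_mul (g i)).mul_const (g j) using 2
  linear_combination (-(g j * s j * g j)) * hgg i - s j * hgg j

lemma tendsto_diagonal_mul_mul_diagonal_pow_mulVec_apply [Nonempty ι]
    (hg : ∀ i, g i = 1 ∨ g i = -1) {M : Matrix ι ι ℝ} (hM : M ∈ doublyStochastic ℝ ι) {m : ℕ}
    (hpos : ∀ i j, 0 < (M ^ m) i j) (b : ι → ℝ) (i : ι) :
    Tendsto (fun t => ((diagonal g * M * diagonal g) ^ t *ᵥ b) i) atTop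
      (nhds (g i * ∑ j, g j * (Fintype.card ι : ℝ)⁻¹ * b j)) := by
  simp only [conj_pow_of_mul_self_eq_one (diagonal_mul_diagonal_of_sign hg)]
  convert (tendsto_pow_mulVec_apply_average hM hpos (g * b) i).const_mul (g i) using 2
  · have hgb : diagonal g *ᵥ b = g * b := funext (mulVec_diagonal g b)
    rw [← mulVec_mulVec, ← mulVec_mulVec, mulVec_diagonal, hgb]
  · simp [Finset.sum_mul, div_eq_mul_inv, mul_right_comm]

end Signs

lemma sum_row_eq_one_of_tendsto_pow {ι : Type*} [Fintype ι] [DecidableEq ι] {B : Matrix ι ι ℝ}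
    {s : ι → ℝ} (hs : s ≠ 0) (hlim : ∀ i j, Tendsto (fun t => (B ^ t) i j) atTop (nhds (s j)))
    (i : ι) : ∑ j, B i j = 1 := by
  obtain ⟨j, hj⟩ := Function.ne_iff.1 hs
  have hshift : Tendsto (fun t => (B ^ (t + 1)) i j) atTop (nhds (s j)) :=
    (hlim i j).comp (tendsto_add_atTop_nat 1)
  have hstep : Tendsto (fun t => (B ^ (t + 1)) i j) atTop (nhds ((∑ k, B i k) * s j)) := by
    simp_rw [pow_succ', mul_apply, Finset.sum_mul]
    exact tendsto_finsetSum _ fun k _ => (hlim k j).const_mul (B i k)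
  exact mul_right_cancel₀ hj ((tendsto_nhds_unique hstep hshift).trans (one_mul _).symm)

lemma eq_abs_of_sum_eq_sum_abs {ι : Type*} [Fintype ι] {f : ι → ℝ}
    (h : ∑ i, f i = ∑ i, |f i|) (i : ι) : f i = |f i| := by
  have hzero := (Finset.sum_eq_zero_iff_of_nonneg fun i _ => sub_nonneg.2 (le_abs_self (f i))).1
    (by rw [Finset.sum_sub_distrib, h, sub_self]) i (Finset.mem_univ i)
  exact (sub_eq_zero.1 hzero).symm

section SignedInteraction

variable {A : Matrix (Fin n) (Fin n) ℝ}

lemma absMat_mem_doublyStochastic (hsym : A.IsSymm) (hrow : ∀ i, ∑ j, |A i j| = 1) :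
    absMat A ∈ doublyStochastic ℝ (Fin n) :=
  mem_doublyStochastic_iff_sum.2 ⟨fun _ _ => abs_nonneg _, hrow,
    fun j => by simpa [absMat, hsym.apply] using hrow j⟩

lemma oppBip_iff_exists_sign :
    OppBip A ↔ ∃ g : Fin n → ℝ, (∀ i, g i = 1 ∨ g i = -1) ∧
      A = diagonal g * absMat A * diagonal g := by
  constructor
  · rintro ⟨S, hS⟩
    classical
    refine ⟨fun i => if i ∈ S then 1 else -1, fun i => by by_cases h : i ∈ S <;> simp [h], ?_⟩
    ext i j
    rw [diagonal_mul_mul_diagonal_apply]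
    by_cases hi : i ∈ S <;> by_cases hj : j ∈ S <;> simp only [hi, hj, absMat, map_apply]
    · simp [abs_of_nonneg ((hS i j).1 (.inl ⟨hi, hj⟩))]
    · simp [abs_of_nonpos ((hS i j).2 (.inl ⟨hi, hj⟩))]
    · simp [abs_of_nonpos ((hS i j).2 (.inr ⟨hi, hj⟩))]
    · simp [abs_of_nonneg ((hS i j).1 (.inr ⟨hi, hj⟩))]
  · rintro ⟨g, hg, hA⟩
    refine ⟨{i | g i = 1}, fun i j => ?_⟩
    have hij : A i j = g i * |A i j| * g j := by
      conv_lhs => rw [hA]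
      rw [diagonal_mul_mul_diagonal_apply]; rfl
    rcases hg i with hi | hi <;> rcases hg j with hj | hj <;>
      simp only [Set.mem_ofPred_eq, hi, hj] at hij ⊢ <;> norm_num <;> linarith [abs_nonneg (A i j)]

lemma Aperiodic.exists_odd_pow_apply_self_pos (h : Aperiodic A) (i : Fin n) :
    ∃ k, Odd k ∧ 0 < (absMat A ^ k) i i := by
  by_contra! hodd
  exact absurd (h i 2 fun k _ hk => even_iff_two_dvd.1 (Nat.not_odd_iff_even.1 fun ho =>
    (hodd k ho).not_gt hk)) (by norm_num)

lemma aperiodic_of_eventually_pow_apply_self_pos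
    (h : ∀ i, ∀ᶠ t in atTop, 0 < (absMat A ^ t) i i) : Aperiodic A := by
  intro i d hd
  obtain ⟨T, hT⟩ := (h i).exists_forall_of_atTop
  have h1 := hd (T + 1) (by omega) (hT _ (by omega))
  have h2 := hd (T + 1 + 1) (by omega) (hT _ (by omega))
  exact Nat.dvd_one.1 ((Nat.dvd_add_right h1).1 h2)

lemma diagonal_mul_mul_diagonal_eq_absMat {g : Fin n → ℝ} (hg : ∀ i, g i = 1 ∨ g i = -1)
    (hrow : ∀ i, ∑ j, |A i j| = 1) (hsum : ∀ i, ∑ j, (diagonal g * A * diagonal g) i j = 1) :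
    diagonal g * A * diagonal g = absMat A := by
  have habs : ∀ i j, |(diagonal g * A * diagonal g) i j| = |A i j| := fun i j => by
    rcases hg i with hi | hi <;> rcases hg j with hj | hj <;> simp [hi, hj]
  ext i j
  rw [eq_abs_of_sum_eq_sum_abs (f := fun j => (diagonal g * A * diagonal g) i j)
    (by simp only [habs, hsum, hrow]) j, habs]
  rfl

end SignedInteraction

theorem stmt_14_general (n : ℕ) (hn : 2 ≤ n) (A : Matrix (Fin n) (Fin n) ℝ)
    (hsym : A.IsSymm) (hrow : ∀ i, ∑ j, |A i j| = 1)
    (hsc : StronglyConnected A) :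
    ((∃ s : Fin n → ℝ, Matrix.vecMul s (absMat A) = s ∧ (∑ j, s j) = 1 ∧
        ∃ g : Fin n → ℝ, (∀ i, g i = 1 ∨ g i = -1) ∧
          ∀ (b₀ : Fin n → ℝ) (i : Fin n),
            Tendsto (fun t => (A ^ t).mulVec b₀ i) atTop
              (nhds (g i * ∑ j, g j * s j * b₀ j))) ↔
      (OppBip A ∧ Aperiodic A)) := by
  have hM := absMat_mem_doublyStochastic hsym hrow
  constructor
  · rintro ⟨s, -, hs, g, hg, hlim⟩
    have hentry : ∀ i j, Tendsto (fun t => (A ^ t) i j) atTop (nhds (g i * g j * s j)) :=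
      fun i j => by
        simpa [mulVec_single_one, Pi.single_apply, mul_assoc] using hlim (Pi.single j 1) i
    have hs0 : s ≠ 0 := by rintro rfl; simp at hs
    have hB := tendsto_diagonal_mul_mul_diagonal_pow_apply hg hentry
    have hBM := diagonal_mul_mul_diagonal_eq_absMat hg hrow (sum_row_eq_one_of_tendsto_pow hs0 hB)
    have hD := diagonal_mul_diagonal_of_sign hg
    refine ⟨oppBip_iff_exists_sign.2 ⟨g, hg, ?_⟩, aperiodic_of_eventually_pow_apply_self_pos
      fun i => eventually_pow_apply_self_pos_of_tendsto hM hsym.absMat (hBM ▸ hB i i)⟩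
    rw [← hBM, ← mul_assoc, ← mul_assoc, hD, one_mul, mul_assoc, hD, mul_one]
  · rintro ⟨hbip, hap⟩
    obtain ⟨g, hg, hA⟩ := oppBip_iff_exists_sign.1 hbip
    have : NeZero n := ⟨by omega⟩
    obtain ⟨m, hm⟩ := (eventually_forall_pow_apply_pos hM hsym.absMat
      (fun i j => (hsc i j).imp fun _ => And.right) hap.exists_odd_pow_apply_self_pos).exists
    refine ⟨fun _ => (n : ℝ)⁻¹, ?_, ?_, g, hg, fun b i => ?_⟩
    · ext j
      simp [vecMul, dotProduct, ← Finset.mul_sum, sum_col_of_mem_doublyStochastic hM]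
    · simp
    · simpa [hA.symm] using tendsto_diagonal_mul_mul_diagonal_pow_mulVec_apply hg hM hm b i

/-- social influence. For a strongly connected signed interaction
matrix `A`, the existence of a stochastic left eigenvector `s` of `|A|` and a
sign assignment `g` such that from any start every agent's opinion converges to
`g(i)·Σ_j g(j)·s_j·(b₀)_j` is equivalent to `A` being opposition bipartite and
aperiodic. -/
theorem stmt_14 (n : ℕ) (hn : 2 ≤ n) (A : Matrix (Fin n) (Fin n) ℝ)
    (hsym : A.IsSymm) (hdiag : ∀ i, A i i = 0) (hrow : ∀ i, ∑ j, |A i j| = 1)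
    (hsc : StronglyConnected A) :
    ((∃ s : Fin n → ℝ, Matrix.vecMul s (absMat A) = s ∧ (∑ j, s j) = 1 ∧
        ∃ g : Fin n → ℝ, (∀ i, g i = 1 ∨ g i = -1) ∧
          ∀ (b₀ : Fin n → ℝ) (i : Fin n),
            Tendsto (fun t => (A ^ t).mulVec b₀ i) atTop
              (nhds (g i * ∑ j, g j * s j * b₀ j))) ↔
      (OppBip A ∧ Aperiodic A)) :=
  stmt_14_general n hn A hsym hrow hsc
end

section
/- Let T = W⊙F be an update operator in which each F_{ij} is continuous and is either the identity or a deviation function D_i depending only on the row index i, and let A = {i : W_{i,Out(i)} > 0}. If μ ∈ ℝ does not belong to ∩_{i∈A} Fix(D_i), then for no initial vector b₀ ∈ ℝ^n do the iterates T^t(b₀) converge to the constant vector (μ,…,μ) as t → ∞ (society cannot become wise about the true value μ). -/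
open Filter
open scoped Classical

/-! A limit of the iterates of the continuous map `T` is a fixed point of `T`. At the consensus
`(μ,…,μ)`, row `i` of the fixed-point equation reads `μ = μ + W_{i,Out(i)} (D_i μ - μ)`, so
`D_i μ = μ` for every agent with positive out-group weight. -/

lemma apply_eq_of_weighted_sum_eq {ι : Type*} [Fintype ι] (w : ι → ℝ) (hw : ∑ j, w j = 1)
    (g : ι → ℝ → ℝ) (d : ℝ → ℝ) (hg : ∀ j, g j = id ∨ g j = d)
    (hpos : 0 < ∑ j ∈ Finset.univ.filter fun j => g j ≠ id, w j)
    (x : ℝ) (hx : ∑ j, w j * g j x = x) : d x = x := by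
  have hsplit : ∑ j, w j * g j x
      = x + (∑ j ∈ Finset.univ.filter fun j => g j ≠ id, w j) * (d x - x) :=
    calc ∑ j, w j * g j x
        = ∑ j, (w j * x + if g j ≠ id then w j * (d x - x) else 0) := by
          refine Finset.sum_congr rfl fun j _ => ?_
          by_cases hj : g j = id
          · simp [hj]
          · rw [if_pos hj, (hg j).resolve_left hj]
            ring
      _ = x + (∑ j ∈ Finset.univ.filter fun j => g j ≠ id, w j) * (d x - x) := by
          rw [Finset.sum_add_distrib, ← Finset.sum_mul, hw, one_mul, ← Finset.sum_filter,
            Finset.sum_mul]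
  have hzero : (∑ j ∈ Finset.univ.filter fun j => g j ≠ id, w j) * (d x - x) = 0 := by
    linarith
  linarith [(mul_eq_zero.mp hzero).resolve_left hpos.ne']

theorem stmt_15_general (n : ℕ)
    (W : Matrix (Fin n) (Fin n) ℝ)
    (hW1 : ∀ i, ∑ j, W i j = 1)
    (F : Fin n → Fin n → ℝ → ℝ)
    (D : Fin n → ℝ → ℝ)
    (hF : ∀ i j, F i j = id ∨ F i j = D i)
    (hFc : ∀ i j, Continuous (F i j))
    (T : (Fin n → ℝ) → Fin n → ℝ)
    (hT : ∀ b i, T b i = ∑ j, W i j * F i j (b j))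
    (A : Set (Fin n))
    (hA : A = {i | 0 < ∑ j ∈ Finset.univ.filter fun j => F i j ≠ id, W i j})
    (μ : ℝ) (hμ : μ ∉ ⋂ i ∈ A, {x : ℝ | D i x = x}) :
    ∀ b₀ : Fin n → ℝ, ¬ Tendsto (fun t => T^[t] b₀) atTop (nhds fun _ => μ) := by
  intro b₀ hlim
  have hTc : Continuous T := by
    rw [show T = fun b i => ∑ j, W i j * F i j (b j) from funext₂ hT]
    fun_prop
  have hfix : T (fun _ => μ) = fun _ => μ := isFixedPt_of_tendsto_iterate hlim hTc.continuousAt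
  simp only [Set.mem_iInter, Set.mem_ofPred_eq, not_forall] at hμ
  obtain ⟨i, hiA, hDi⟩ := hμ
  subst hA
  exact hDi <| apply_eq_of_weighted_sum_eq (W i) (hW1 i) (F i) (D i) (hF i) hiA μ
    (by rw [← hT, hfix])

/-- no wisdom. With continuous entries, each the identity or a
row-dependent deviation function, if `μ` is not a common neutral opinion of
all agents with positive out-group weight, then no initial opinion vector
leads the iterates to converge to the consensus `(μ,…,μ)`. -/
theorem stmt_15 (n : ℕ) (hn : 2 ≤ n)
    (W : Matrix (Fin n) (Fin n) ℝ)
    (hW0 : ∀ i j, 0 ≤ W i j) (hW1 : ∀ i, ∑ j, W i j = 1)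
    (F : Fin n → Fin n → ℝ → ℝ)
    (D : Fin n → ℝ → ℝ) (hD : ∀ i, D i ≠ id)
    (hF : ∀ i j, F i j = id ∨ F i j = D i)
    (hFc : ∀ i j, Continuous (F i j))
    (T : (Fin n → ℝ) → Fin n → ℝ)
    (hT : ∀ b i, T b i = ∑ j, W i j * F i j (b j))
    (A : Set (Fin n))
    (hA : A = {i | 0 < ∑ j ∈ Finset.univ.filter fun j => F i j ≠ id, W i j})
    (μ : ℝ) (hμ : μ ∉ ⋂ i ∈ A, {x : ℝ | D i x = x}) :
    ∀ b₀ : Fin n → ℝ, ¬ Tendsto (fun t => T^[t] b₀) atTop (nhds fun _ => μ) :=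
  stmt_15_general n W hW1 F D hF hFc T hT A hA μ hμ
end
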